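/- arXiv:math/0608641 — 7 statements merged into one kernel-verified Lean document; each statement's English description precedes it below -/
import Mathlib

section
/- If (A,B,E) is an invariant and Φ(A,B,E) holds, then the evaluation ⟨A,B,E⟩ is at most ℵ₁, i.e., there is a set X ⊆ B of cardinality at most ℵ₁ such that every a ∈ A is E-related to some element of X. -/
open Set

/-- The first uncountable ordinal. -/
noncomputable def omega1 : Ordinal.{0} := (Cardinal.aleph 1).ord

/-- A club (closed unbounded) subset of `ω₁`. -/
def IsClubBelowOmega1 (C : Set Ordinal.{0}) : Prop :=
  (∀ o < omega1, ∃ p ∈ C, o ≤ p ∧ p < omega1) ∧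
  (∀ o, o < omega1 → o ≠ 0 → (∀ p < o, ∃ q ∈ C, p < q ∧ q < o) → o ∈ C)

/-- A stationary subset of `ω₁`: one meeting every club. -/
def IsStatOmega1 (S : Set Ordinal.{0}) : Prop :=
  ∀ C, IsClubBelowOmega1 C → (S ∩ C).Nonempty

/-- The principle `Φ(A,B,E)`: for every `F : 2^{<ω₁} → A` there is `g : ω₁ → B`
guessing every `f : ω₁ → 2` stationarily often via `E`. -/
def PhiPrinciple {A B : Type*} (E : A → B → Prop) : Prop :=
  ∀ F : (α : Ordinal.{0}) → (Set.Iio α → Bool) → A,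
    ∃ g : Ordinal.{0} → B,
      ∀ f : Ordinal.{0} → Bool,
        IsStatOmega1 {α | α < omega1 ∧ E (F α (fun β => f β.1)) (g α)}

lemma omega0_lt_omega1 : Ordinal.omega0 < omega1 := by
  rw [omega1, ← Cardinal.ord_aleph0]
  exact Cardinal.ord_lt_ord.mpr Cardinal.aleph0_lt_aleph_one

lemma club_ge_omega0 :
    IsClubBelowOmega1 {o | Ordinal.omega0 ≤ o ∧ o < omega1} := by
  constructor
  · intro o ho
    exact ⟨max o Ordinal.omega0, ⟨le_max_right _ _, max_lt ho omega0_lt_omega1⟩,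
      le_max_left _ _, max_lt ho omega0_lt_omega1⟩
  · intro o ho ho0 h
    obtain ⟨q, hqC, _, hqo⟩ := h 0 (pos_iff_ne_zero.mpr ho0)
    exact ⟨le_of_lt (lt_of_le_of_lt hqC.1 hqo), ho⟩

/-- `Φ(A,B,E)` implies the evaluation `⟨A,B,E⟩` is at most `ℵ₁`. -/
theorem Phi_implies_eval_le_aleph_one {A B : Type}
    (E : A → B → Prop)
    (hAcard : Cardinal.mk A ≤ Cardinal.continuum)
    (hBcard : Cardinal.mk B ≤ Cardinal.continuum)
    (hA : ∀ a : A, ∃ b : B, E a b) (hB : ∀ b : B, ∃ a : A, ¬ E a b)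
    (hPhi : PhiPrinciple E) :
    ∃ X : Set B, Cardinal.mk X ≤ Cardinal.aleph 1 ∧ ∀ a : A, ∃ b ∈ X, E a b := by
  cases isEmpty_or_nonempty A with
  | inl h =>
    exact ⟨∅, by simp, fun a => h.elim a⟩
  | inr hne =>
    -- a surjection from ℕ → Bool onto A
    have hcont : Cardinal.mk A ≤ Cardinal.mk (ℕ → Bool) := by
      refine hAcard.trans_eq ?_
      simp [Cardinal.mk_arrow, Cardinal.two_power_aleph0]
    obtain ⟨e⟩ := Cardinal.le_def _ _ |>.mp hcont
    set σ : (ℕ → Bool) → A := Function.invFun e with hσ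
    have hσsurj : Function.Surjective σ :=
      Function.invFun_surjective e.injective
    -- the reading function
    set F : (α : Ordinal.{0}) → (Set.Iio α → Bool) → A :=
      fun α s => σ (fun n => if h : (n : Ordinal.{0}) < α then s ⟨n, h⟩ else false) with hF
    obtain ⟨g, hg⟩ := hPhi F
    refine ⟨g '' Set.Iio omega1, ?_, ?_⟩
    · -- cardinality bound
      rw [← Cardinal.lift_le.{1}]
      calc Cardinal.lift.{1} (Cardinal.mk (g '' Set.Iio omega1))
          ≤ Cardinal.mk (Set.Iio omega1) := by
            simpa using Cardinal.mk_image_le_lift (f := g) (s := Set.Iio omega1)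
        _ = Cardinal.lift.{1} (Cardinal.aleph 1) := by
            rw [Ordinal.mk_Iio_ordinal, omega1, Cardinal.card_ord]
    · intro a
      obtain ⟨c, hc⟩ := hσsurj a
      -- encode c into an f : Ordinal → Bool
      set f : Ordinal.{0} → Bool := fun β =>
        if h : β < Ordinal.omega0 then c (Classical.choose (Ordinal.lt_omega0.mp h))
        else false with hf
      have hfn : ∀ n : ℕ, f (n : Ordinal.{0}) = c n := by
        intro n
        have hn : (n : Ordinal.{0}) < Ordinal.omega0 := Ordinal.nat_lt_omega0 n
        have hspec := Classical.choose_spec (Ordinal.lt_omega0.mp hn)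
        have : Classical.choose (Ordinal.lt_omega0.mp hn) = n := by
          exact_mod_cast (Nat.cast_injective (R := Ordinal.{0}) hspec.symm)
        simp [hf, hn, this]
      obtain ⟨α, ⟨hα1, hαE⟩, hαω, _⟩ := hg f _ club_ge_omega0
      refine ⟨g α, Set.mem_image_of_mem g hα1, ?_⟩
      have hFa : F α (fun β : Set.Iio α => f β.1) = a := by
        rw [hF, ← hc]
        show σ _ = σ c
        congr 1
        funext n
        have hn : (n : Ordinal.{0}) < α :=
          lt_of_lt_of_le (Ordinal.nat_lt_omega0 n) hαω
        simp [hn, hfn n]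
      rwa [hFa] at hαE
end

section
/- Φ(ℝ, =) (the principle Φ for the invariant 𝔠 = (ℝ, ℝ, =)) implies Jensen's diamond principle ◇. Consequently Φ(𝔠) is equivalent to ◇. -/
open Set

/-- Jensen's diamond, in the subset-guessing form: there are `A_α ⊆ α` such that
every `X ⊆ ω₁` satisfies that `{α : X ∩ α = A_α}` is stationary. -/
def JensenDiamondSets : Prop :=
  ∃ A : Ordinal.{0} → Set Ordinal.{0},
    (∀ α, A α ⊆ Set.Iio α) ∧
    ∀ X : Set Ordinal.{0}, IsStatOmega1 {α | α < omega1 ∧ X ∩ Set.Iio α = A α}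

lemma stat_mono {S T : Set Ordinal.{0}} (h : S ⊆ T) (hS : IsStatOmega1 S) :
    IsStatOmega1 T := fun C hC => by
  obtain ⟨x, hx1, hx2⟩ := hS C hC
  exact ⟨x, h hx1, hx2⟩

lemma embed_real {α : Ordinal.{0}} (hα : α < omega1) :
    Nonempty ((Set.Iio α → Bool) ↪ ℝ) := by
  rw [← Cardinal.lift_mk_le']
  have hcard : α.card ≤ Cardinal.aleph0 := by
    have := (Cardinal.lt_ord.mp hα)
    rwa [← Cardinal.succ_aleph0, Order.lt_succ_iff] at this
  have h1 : Cardinal.mk (Set.Iio α) ≤ Cardinal.aleph0 := by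
    rw [Ordinal.mk_Iio_ordinal]
    calc Cardinal.lift.{1} α.card ≤ Cardinal.lift.{1} Cardinal.aleph0 :=
          Cardinal.lift_le.mpr hcard
      _ = Cardinal.aleph0 := Cardinal.lift_aleph0
  have h2 : Cardinal.mk (Set.Iio α → Bool) ≤ Cardinal.continuum := by
    rw [Cardinal.mk_arrow]
    calc Cardinal.lift.{1} (Cardinal.mk Bool) ^ Cardinal.lift.{0} (Cardinal.mk (Set.Iio α))
        = 2 ^ Cardinal.mk (Set.Iio α) := by
          rw [Cardinal.mk_bool, Cardinal.lift_two, Cardinal.lift_id']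
      _ ≤ 2 ^ Cardinal.aleph0 := by
          exact Cardinal.power_le_power_left two_ne_zero h1
      _ = Cardinal.continuum := Cardinal.two_power_aleph0
  calc Cardinal.lift.{0} (Cardinal.mk (Set.Iio α → Bool))
      = Cardinal.mk (Set.Iio α → Bool) := Cardinal.lift_id' _
    _ ≤ Cardinal.continuum := h2
    _ = Cardinal.lift.{1} (Cardinal.mk ℝ) := by rw [Cardinal.mk_real, Cardinal.lift_continuum]

/-- `Φ(ℝ,=)`, i.e. `Φ(𝔠)`, is equivalent to Jensen's `◇`; in particular it
implies `◇`. -/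
theorem Phi_continuum_iff_diamond :
    PhiPrinciple (fun x y : ℝ => x = y) ↔ JensenDiamondSets := by
  constructor
  · intro hPhi
    classical
    -- the coding function
    set ι : (α : Ordinal.{0}) → (Set.Iio α → Bool) → ℝ :=
      fun α s => if h : Nonempty ((Set.Iio α → Bool) ↪ ℝ) then h.some s else 0 with hι
    have ιinj : ∀ α : Ordinal.{0}, α < omega1 → Function.Injective (ι α) := by
      intro α hα s t hst
      have h := embed_real hα
      simp only [hι, dif_pos h] at hst
      exact h.some.injective hst
    obtain ⟨g, hg⟩ := hPhi ι
    refine ⟨fun α =>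
      if h : ∃ s : Set.Iio α → Bool, ι α s = g α then
        {β | ∃ hb : β ∈ Set.Iio α, h.choose ⟨β, hb⟩ = true} else ∅, ?_, ?_⟩
    · intro α β hβ
      change (if h : ∃ s : Set.Iio α → Bool, ι α s = g α then {β | ∃ hb : β ∈ Set.Iio α, h.choose ⟨β, hb⟩ = true} else (∅ : Set Ordinal.{0})) β at hβ
      by_cases h : ∃ s : Set.Iio α → Bool, ι α s = g α
      · simp only [dif_pos h] at hβ
        exact hβ.choose
      · simp only [dif_neg h] at hβ
        exact absurd hβ (notMem_empty β)
    · intro X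
      have := hg (fun β => decide (β ∈ X))
      refine stat_mono ?_ this
      rintro α ⟨hα1, hα2⟩
      refine ⟨hα1, ?_⟩
      replace hα2 : ι α (fun β : Set.Iio α => decide (β.1 ∈ X)) = g α := hα2
      have h : ∃ s : Set.Iio α → Bool, ι α s = g α := ⟨_, hα2⟩
      simp only [dif_pos h]
      have hc : h.choose = fun β : Set.Iio α => decide (β.1 ∈ X) :=
        ιinj α hα1 (h.choose_spec.trans hα2.symm)
      ext β
      simp only [mem_inter_iff, mem_setOf_eq, hc, decide_eq_true_iff, mem_Iio]
      tauto
  · rintro ⟨A, hA1, hA2⟩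
    classical
    intro F
    refine ⟨fun α => F α (fun β => decide (β.1 ∈ A α)), ?_⟩
    intro f
    have := hA2 {β | f β = true}
    refine stat_mono ?_ this
    rintro α ⟨hα1, hα2⟩
    refine ⟨hα1, ?_⟩
    show F α _ = F α _
    congr 1
    funext β
    have : β.1 ∈ A α ↔ f β.1 = true := by
      constructor
      · intro h
        have : β.1 ∈ {β | f β = true} ∩ Set.Iio α := by rw [hα2]; exact h
        exact this.1
      · intro h
        have : β.1 ∈ {β | f β = true} ∩ Set.Iio α := Set.mem_inter h β.2
        rw [hα2] at this; exact this
    rw [Bool.eq_iff_iff]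
    simp [this]
end

section
/- The principle Φ(2, ≠) is equivalent to Φ(ℝ, ≠). That is: (for every F : 2^{<ω₁} → 2 there is g : ω₁ → 2 with {α : F(f ↾ α) ≠ g(α)} stationary for all f : ω₁ → 2) if and only if (for every F : 2^{<ω₁} → ℝ there is g : ω₁ → ℝ with {α : F(f ↾ α) ≠ g(α)} stationary for all f : ω₁ → 2). -/
open Set

namespace PhiAux

open Cardinal Ordinal

lemma stat_mono {S T : Set Ordinal.{0}} (h : S ⊆ T) (hS : IsStatOmega1 S) :
    IsStatOmega1 T := fun C hC => by
  obtain ⟨x, hxS, hxC⟩ := hS C hC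
  exact ⟨x, h hxS, hxC⟩

lemma succ_lt_omega1 {x : Ordinal.{0}} (hx : x < omega1) : x + 1 < omega1 := by
  rw [Ordinal.add_one_eq_succ]
  exact (Cardinal.isSuccLimit_ord (Cardinal.aleph0_le_aleph 1)).succ_lt hx

lemma step_lt_omega1 {x : Ordinal.{0}} (hx : x < omega1) (n : ℕ) :
    Ordinal.omega0 * x + (n : Ordinal) < omega1 := by
  rw [omega1, Cardinal.lt_ord] at *
  rw [Ordinal.card_add, Ordinal.card_mul, Ordinal.card_omega0, Ordinal.card_nat]
  exact Cardinal.add_lt_of_lt (Cardinal.aleph0_le_aleph 1)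
    (Cardinal.mul_lt_of_lt (Cardinal.aleph0_le_aleph 1) Cardinal.aleph0_lt_aleph_one hx)
    ((Cardinal.nat_lt_aleph0 n).trans Cardinal.aleph0_lt_aleph_one)

lemma sup_lt_omega1 {x : ℕ → Ordinal.{0}} (hx : ∀ k, x k < omega1) :
    (⨆ k, x k) < omega1 := by
  rw [omega1] at hx ⊢
  refine Ordinal.iSup_lt_ord ?_ hx
  rw [Cardinal.isRegular_aleph_one.cof_eq, Cardinal.mk_nat]
  exact Cardinal.aleph0_lt_aleph_one

lemma code_inj {β β' : Ordinal.{0}} {n n' : ℕ}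
    (h : Ordinal.omega0 * β + (n : Ordinal) = Ordinal.omega0 * β' + (n' : Ordinal)) : β = β' ∧ n = n' := by
  have hb : β = β' := by
    have h2 := congrArg (· / ω) h
    simpa [Ordinal.mul_add_div _ Ordinal.omega0_ne_zero,
      Ordinal.div_eq_zero_of_lt (Ordinal.nat_lt_omega0 _)] using h2
  subst hb
  have hn := (add_right_inj (Ordinal.omega0 * β)).mp h
  exact ⟨rfl, Nat.cast_injective hn⟩

/-- The set of ordinals closed under the coding map `(β, n) ↦ ω·β + n`. -/
def ClosSet : Set Ordinal.{0} :=
  {α | 0 < α ∧ ∀ β < α, ∀ n : ℕ, Ordinal.omega0 * β + (n : Ordinal) < α}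

lemma step_lt_of_lt {β x : Ordinal.{0}} (hβ : β < x) (n : ℕ) :
    Ordinal.omega0 * β + (n : Ordinal) < Ordinal.omega0 * x + 1 := by
  have h1 : Ordinal.omega0 * β + (n : Ordinal) < Ordinal.omega0 * β + ω :=
    add_lt_add_right (Ordinal.nat_lt_omega0 n) _
  have h2 : Ordinal.omega0 * β + ω = Ordinal.omega0 * (β + 1) := by rw [mul_add, mul_one]
  have h3 : Ordinal.omega0 * (β + 1) ≤ Ordinal.omega0 * x := by
    apply mul_le_mul_right
    rwa [Ordinal.add_one_eq_succ, Order.succ_le_iff]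
  calc Ordinal.omega0 * β + (n : Ordinal) < Ordinal.omega0 * (β + 1) := h2 ▸ h1
    _ ≤ Ordinal.omega0 * x := h3
    _ ≤ Ordinal.omega0 * x + 1 := le_add_right le_rfl

lemma closSet_club : IsClubBelowOmega1 ClosSet := by
  constructor
  · intro o ho
    -- iterate x ↦ Ordinal.omega0 * x + 1 starting from o + 1
    set x : ℕ → Ordinal.{0} := fun k => Nat.rec (o + 1) (fun _ y => Ordinal.omega0 * y + 1) k with hxdef
    have hx0 : x 0 = o + 1 := rfl
    have hxs : ∀ k, x (k + 1) = Ordinal.omega0 * x k + 1 := fun k => rfl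
    have hxlt : ∀ k, x k < omega1 := by
      intro k
      induction k with
      | zero => exact succ_lt_omega1 ho
      | succ k ih =>
        rw [hxs]
        have := step_lt_omega1 ih 1
        simpa using this
    refine ⟨⨆ k, x k, ⟨?_, ?_⟩, ?_, sup_lt_omega1 hxlt⟩
    · have : (0 : Ordinal) < x 0 := by
        rw [hx0, Ordinal.add_one_eq_succ]
        exact (zero_le (a := o)).trans_lt (Order.lt_succ o)
      exact this.trans_le (Ordinal.le_iSup x 0)
    · intro β hβ n
      rw [Ordinal.lt_iSup_iff] at hβ
      obtain ⟨k, hk⟩ := hβ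
      exact (step_lt_of_lt hk n).trans_le ((hxs k ▸ Ordinal.le_iSup x (k + 1)))
    · exact le_trans ((le_add_right (le_refl o) : o ≤ o + 1).trans_eq hx0.symm) (Ordinal.le_iSup x 0)
  · intro α hα hα0 hcl
    refine ⟨pos_iff_ne_zero.mpr hα0, ?_⟩
    intro β hβ n
    obtain ⟨q, hqD, hβq, hqα⟩ := hcl β hβ
    exact (hqD.2 β hβq n).trans hqα

lemma iInter_club {C : ℕ → Set Ordinal.{0}} (h : ∀ n, IsClubBelowOmega1 (C n)) :
    IsClubBelowOmega1 (⋂ n, C n) := by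
  classical
  -- choice of a member of `C n` above a given ordinal
  have hchoice : ∀ x : Ordinal.{0}, x < omega1 → ∀ n : ℕ,
      ∃ p, p ∈ C n ∧ x ≤ p ∧ p < omega1 := by
    intro x hx n
    obtain ⟨p, hp, hxp, hpo⟩ := (h n).1 x hx
    exact ⟨p, hp, hxp, hpo⟩
  set q : Ordinal.{0} → ℕ → Ordinal.{0} := fun x n =>
    if hx : x < omega1 then (hchoice x hx n).choose else 0 with hqdef
  have hq : ∀ x (hx : x < omega1) (n : ℕ),
      q x n ∈ C n ∧ x ≤ q x n ∧ q x n < omega1 := by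
    intro x hx n
    simp only [hqdef, dif_pos hx]
    exact (hchoice x hx n).choose_spec
  constructor
  · intro o ho
    set x : ℕ → Ordinal.{0} := fun k => Nat.rec o (fun _ y => (⨆ n, q y n) + 1) k with hxdef
    have hxs : ∀ k, x (k + 1) = (⨆ n, q (x k) n) + 1 := fun k => rfl
    have hxlt : ∀ k, x k < omega1 := by
      intro k
      induction k with
      | zero => exact ho
      | succ k ih =>
        rw [hxs]
        exact succ_lt_omega1 (sup_lt_omega1 fun n => (hq _ ih n).2.2)
    have hlim : ∀ k n, q (x k) n < x (k + 1) := by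
      intro k n
      rw [hxs]
      exact lt_of_le_of_lt (Ordinal.le_iSup _ n) (lt_add_one _)
    have hsuplt : (⨆ k, x k) < omega1 := sup_lt_omega1 hxlt
    have hxle : ∀ k, x k ≤ ⨆ k, x k := fun k => Ordinal.le_iSup x k
    have hne : (⨆ k, x k) ≠ 0 := by
      intro h0
      have h1 : x 1 ≤ 0 := h0 ▸ hxle 1
      have e1 : x 1 = (⨆ n, q (x 0) n) + 1 := rfl
      rw [e1, Ordinal.add_one_eq_succ, nonpos_iff_eq_zero] at h1
      exact Ordinal.succ_ne_zero _ h1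
    refine ⟨⨆ k, x k, ?_, hxle 0, hsuplt⟩
    rw [Set.mem_iInter]
    intro n
    refine (h n).2 _ hsuplt hne ?_
    intro p hp
    rw [Ordinal.lt_iSup_iff] at hp
    obtain ⟨k, hk⟩ := hp
    refine ⟨q (x k) n, (hq _ (hxlt k) n).1, hk.trans_le (hq _ (hxlt k) n).2.1, ?_⟩
    exact (hlim k n).trans_le (hxle (k + 1))
  · intro α hα hα0 hcl
    rw [Set.mem_iInter]
    intro n
    refine (h n).2 _ hα hα0 ?_
    intro p hp
    obtain ⟨r, hr, hpr, hrα⟩ := hcl p hp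
    rw [Set.mem_iInter] at hr
    exact ⟨r, hr n, hpr, hrα⟩

end PhiAux

/-- `Φ(2,≠)` is equivalent to `Φ(ℝ,≠)`. -/
theorem Phi_two_ne_iff_Phi_real_ne :
    PhiPrinciple (fun a b : Bool => a ≠ b) ↔ PhiPrinciple (fun a b : ℝ => a ≠ b) := by
  classical
  constructor
  · -- easy direction: project ℝ to Bool
    intro h2 F
    obtain ⟨g2, hg2⟩ := h2 (fun α s => if F α s = 0 then true else false)
    refine ⟨fun α => if g2 α then 0 else 1, fun f => ?_⟩
    refine PhiAux.stat_mono ?_ (hg2 f)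
    rintro α ⟨hα, hne⟩
    refine ⟨hα, fun he => hne ?_⟩
    rw [he]
    cases hb : g2 α <;> simp [hb]
  · -- hard direction, by contraposition
    intro hR
    by_contra h2
    rw [PhiPrinciple] at h2
    push_neg at h2
    obtain ⟨F, hF⟩ := h2
    -- an equiv between Cantor space and ℝ
    have hcard : (Cardinal.mk (ℕ → Bool)) = Cardinal.mk ℝ := by
      rw [← Cardinal.power_def, Cardinal.mk_bool, Cardinal.mk_nat,
        Cardinal.two_power_aleph0, Cardinal.mk_real]
    obtain ⟨e⟩ : Nonempty ((ℕ → Bool) ≃ ℝ) := Cardinal.eq.mp hcard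
    -- the coded real-valued F
    set Fbar : (α : Ordinal.{0}) → (Set.Iio α → Bool) → ℝ := fun α s =>
      e (fun n => F α (fun β =>
        if h : Ordinal.omega0 * β.1 + (n : Ordinal) < α then s ⟨Ordinal.omega0 * β.1 + (n : Ordinal), h⟩
        else false)) with hFbar
    obtain ⟨gbar, hgbar⟩ := hR Fbar
    -- for each n, a function `f n` that is guessed club-often by the n-th coordinate
    have hFn : ∀ n : ℕ, ∃ f : Ordinal.{0} → Bool, ∃ C, IsClubBelowOmega1 C ∧
        ∀ α ∈ C, α < omega1 →
          (F α (fun β => f β.1)) = e.symm (gbar α) n := by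
      intro n
      obtain ⟨f, hf⟩ := hF (fun α => e.symm (gbar α) n)
      rw [IsStatOmega1] at hf
      push_neg at hf
      obtain ⟨C, hC, hCne⟩ := hf
      refine ⟨f, C, hC, fun α hαC hα => ?_⟩
      by_contra hne
      exact Set.eq_empty_iff_forall_notMem.mp hCne α ⟨⟨hα, hne⟩, hαC⟩
    choose f C hC hCguess using hFn
    -- the combined function
    set fstar : Ordinal.{0} → Bool := fun γ =>
      if h : ∃ p : Ordinal.{0} × ℕ, Ordinal.omega0 * p.1 + (p.2 : Ordinal) = γ then
        f h.choose.2 h.choose.1 else false with hfstar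
    have hfstar_code : ∀ (β : Ordinal.{0}) (n : ℕ),
        fstar (Ordinal.omega0 * β + (n : Ordinal)) = f n β := by
      intro β n
      have hex : ∃ p : Ordinal.{0} × ℕ, Ordinal.omega0 * p.1 + (p.2 : Ordinal) = Ordinal.omega0 * β + (n : Ordinal) :=
        ⟨⟨β, n⟩, rfl⟩
      simp only [hfstar, dif_pos hex]
      obtain ⟨h1, h2⟩ := PhiAux.code_inj hex.choose_spec
      rw [h1, h2]
    -- the combined club
    set Call : ℕ → Set Ordinal.{0} := fun k =>
      match k with
      | 0 => PhiAux.ClosSet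
      | n + 1 => C n with hCall
    have hCallclub : IsClubBelowOmega1 (⋂ k, Call k) :=
      PhiAux.iInter_club (fun k => by
        match k with
        | 0 => exact PhiAux.closSet_club
        | n + 1 => exact hC n)
    obtain ⟨α, ⟨hα1, hαne⟩, hαC⟩ := hgbar fstar _ hCallclub
    rw [Set.mem_iInter] at hαC
    have hαD : α ∈ PhiAux.ClosSet := hαC 0
    apply hαne
    -- compute Fbar at α
    have hkey : ∀ n : ℕ, (fun β : Set.Iio α =>
        if h : Ordinal.omega0 * β.1 + (n : Ordinal) < α then fstar (Ordinal.omega0 * β.1 + (n : Ordinal))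
        else false) = fun β : Set.Iio α => f n β.1 := by
      intro n
      funext β
      have hlt : Ordinal.omega0 * β.1 + (n : Ordinal) < α := hαD.2 β.1 β.2 n
      rw [dif_pos hlt, hfstar_code]
    show Fbar α (fun β => fstar β.1) = gbar α
    calc Fbar α (fun β => fstar β.1)
        = e (fun n => F α (fun β => f n β.1)) := by
          simp only [hFbar]
          congr 1
          funext n
          exact congrArg (F α) (hkey n)
      _ = e (fun n => e.symm (gbar α) n) := by
          congr 1
          funext n
          exact hCguess n α (hαC (n + 1)) hα1
      _ = gbar α := by
          exact e.apply_symm_apply (gbar α)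
end

section
/- There exists a ladder system ⟨C_δ : δ a countable positive limit ordinal⟩ (each C_δ a cofinal subset of δ of order type ω) such that for any two limit ordinals γ < δ < ω₁, the intersection C_γ ∩ C_δ is an initial segment of both C_γ and C_δ. -/
open Set

namespace NeatLadder

open Ordinal

/-- The node at level `n` with junk `j` over the limit-or-zero base `ω * q`. -/
noncomputable def nodeOf (n j : ℕ) (q : Ordinal.{0}) : Ordinal.{0} :=
  ω * q + ((Nat.pair n j + 1 : ℕ) : Ordinal)

def IsNode (n : ℕ) (x : Ordinal.{0}) : Prop := ∃ j q, x = nodeOf n j q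

lemma node_mod (n j : ℕ) (q : Ordinal) :
    (nodeOf n j q) % ω = ((Nat.pair n j + 1 : ℕ) : Ordinal) := by
  rw [nodeOf, Ordinal.mul_add_mod_self, Ordinal.mod_eq_of_lt (Ordinal.nat_lt_omega0 _)]

lemma node_div (n j : ℕ) (q : Ordinal) : (nodeOf n j q) / ω = q := by
  rw [nodeOf, Ordinal.mul_add_div _ Ordinal.omega0_ne_zero,
    Ordinal.div_eq_zero_of_lt (Ordinal.nat_lt_omega0 _), add_zero]

open scoped Classical in
/-- An enumeration of the ordinals below `μ` (when `μ` is countable). -/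
noncomputable def E (μ : Ordinal.{0}) : ℕ → Ordinal.{0} :=
  if h : ∃ f : ℕ → Ordinal.{0}, ∀ x < μ, ∃ n, f n = x then h.choose else fun _ => 0

lemma E_spec {μ : Ordinal.{0}} (hμ : μ < omega1) : ∀ x < μ, ∃ n, E μ n = x := by
  have hex : ∃ f : ℕ → Ordinal.{0}, ∀ x < μ, ∃ n, f n = x := by
    rcases eq_or_ne μ 0 with rfl | hμ0
    · exact ⟨fun _ => 0, fun x hx => absurd hx (not_lt_zero (a := x))⟩
    · have hcard : μ.card < Cardinal.aleph 1 := Cardinal.lt_ord.1 hμ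
      have h1 : μ.card ≤ Cardinal.aleph0 := by
        rwa [← Cardinal.succ_aleph0, Order.lt_succ_iff] at hcard
      have hcount : Cardinal.mk (Set.Iio μ) ≤ Cardinal.aleph0 := by
        rw [Ordinal.mk_Iio_ordinal]
        simpa using Cardinal.lift_le.{1}.2 h1
      have : Countable (Set.Iio μ) := Cardinal.mk_le_aleph0_iff.1 hcount
      have hne : Nonempty (Set.Iio μ) := ⟨⟨0, pos_iff_ne_zero.2 hμ0⟩⟩
      obtain ⟨f, hf⟩ := exists_surjective_nat (Set.Iio μ)
      exact ⟨fun n => (f n).1, fun x hx => by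
        obtain ⟨n, hn⟩ := hf ⟨x, hx⟩
        exact ⟨n, by simp [hn]⟩⟩
  rw [E, dif_pos hex]
  exact hex.choose_spec

/-- The finite part of `y` (the natural number `y % ω`). -/
noncomputable def finPart (y : Ordinal.{0}) : ℕ :=
  (Ordinal.lt_omega0.1 (Ordinal.mod_lt y Ordinal.omega0_ne_zero)).choose

lemma finPart_spec (y : Ordinal.{0}) : y % ω = (finPart y : Ordinal) :=
  (Ordinal.lt_omega0.1 (Ordinal.mod_lt y Ordinal.omega0_ne_zero)).choose_spec

lemma finPart_node (n j : ℕ) (q : Ordinal) :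
    finPart (nodeOf n j q) = Nat.pair n j + 1 := by
  have h := (finPart_spec (nodeOf n j q)).symm.trans (node_mod n j q)
  exact_mod_cast h

lemma node_level_unique {n n' : ℕ} {x : Ordinal.{0}}
    (h : IsNode n x) (h' : IsNode n' x) : n = n' := by
  obtain ⟨j, q, rfl⟩ := h
  obtain ⟨j', q', hx⟩ := h'
  have h1 : Nat.pair n j + 1 = Nat.pair n' j' + 1 := by
    rw [← finPart_node n j q, hx, finPart_node]
  have h2 : Nat.pair n j = Nat.pair n' j' := by omega
  have := congrArg (fun k => (Nat.unpair k).1) h2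
  simpa using this

open scoped Classical in
/-- The predecessor (parent) function on nodes. -/
noncomputable def pred (y : Ordinal.{0}) : Ordinal.{0} :=
  match finPart y with
  | 0 => 0
  | (k+1) =>
    match Nat.unpair k with
    | (0, _) => 0
    | (n+1, 0) => nodeOf n 0 (y / ω)
    | (n+1, j+1) => if IsNode n (E (ω * (y / ω)) j) then E (ω * (y / ω)) j else 0

lemma pred_node_zero (n : ℕ) (q : Ordinal) :
    pred (nodeOf (n+1) 0 q) = nodeOf n 0 q := by
  rw [pred, finPart_node, node_div]
  simp [Nat.unpair_pair]

lemma pred_node_succ (n j : ℕ) (q : Ordinal) (h : IsNode n (E (ω * q) j)) :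
    pred (nodeOf (n+1) (j+1) q) = E (ω * q) j := by
  rw [pred, finPart_node, node_div]
  simp [Nat.unpair_pair, if_pos h]

lemma add_nat_lt {δ a : Ordinal.{0}} (hδ : Order.IsSuccLimit δ) (ha : a < δ) (m : ℕ) :
    a + (m : Ordinal) < δ := by
  induction m with
  | zero => simpa
  | succ k ih =>
    have h1 : (a + (k : Ordinal)) + 1 < δ := by
      rw [Ordinal.add_one_eq_succ]; exact hδ.succ_lt ih
    have h2 : a + ((k + 1 : ℕ) : Ordinal) = (a + (k : Ordinal)) + 1 := by
      rw [Nat.cast_add, Nat.cast_one, add_assoc]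
    rwa [h2]

lemma exists_branch {δ : Ordinal.{0}} (h1 : δ < omega1) (hδ : Order.IsSuccLimit δ) :
    ∃ b : ℕ → Ordinal.{0}, StrictMono b ∧ (∀ n, b n < δ) ∧ (∀ β < δ, ∃ n, β ≤ b n) ∧
      (∀ n, IsNode n (b n)) ∧ (∀ n, pred (b (n+1)) = b n) := by
  by_cases hcase : ∃ q, δ = ω * q + ω
  · obtain ⟨q, rfl⟩ := hcase
    refine ⟨fun n => nodeOf n 0 q, ?_, ?_, ?_, fun n => ⟨0, q, rfl⟩,
      fun n => pred_node_zero n q⟩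
    · intro m n hmn
      have hp : Nat.pair m 0 + 1 < Nat.pair n 0 + 1 := by
        simp only [Nat.pair, Nat.not_lt_zero, if_false]
        nlinarith
      exact add_lt_add_right (by exact_mod_cast hp) _
    · intro n; exact add_lt_add_right (Ordinal.nat_lt_omega0 _) _
    · intro β hβ
      rcases lt_or_ge β (ω * q) with h | h
      · exact ⟨0, le_of_lt (h.trans_le le_self_add)⟩
      · have hsub : β - ω * q < ω := Ordinal.sub_lt_of_lt_add hβ Ordinal.omega0_pos
        obtain ⟨m, hm⟩ := Ordinal.lt_omega0.1 hsub
        have hβeq : β = ω * q + (m : Ordinal) := by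
          rw [← hm, Ordinal.add_sub_cancel_of_le h]
        refine ⟨m, ?_⟩
        rw [hβeq]
        unfold nodeOf
        refine add_le_add_right ?_ _
        exact_mod_cast Nat.le_succ_of_le (Nat.left_le_pair m 0)
  · have hstep0 : ∀ β < δ, ∃ q, β < ω * q ∧ ω * q < δ := by
      intro β hβ
      refine ⟨β / ω + 1, ?_, ?_⟩
      · calc β = ω * (β / ω) + β % ω := (Ordinal.div_add_mod β ω).symm
          _ < ω * (β / ω) + ω := add_lt_add_right (Ordinal.mod_lt β Ordinal.omega0_ne_zero) _
          _ = ω * (β / ω + 1) := by rw [mul_add_one]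
      · by_contra hle
        push_neg at hle
        have hlam : ω * (β / ω) ≤ β := Ordinal.mul_div_le β ω
        have hlamlt : ω * (β / ω) < δ := lt_of_le_of_lt hlam hβ
        have hδle : δ ≤ ω * (β / ω) + ω := by rwa [mul_add_one] at hle
        rcases eq_or_lt_of_le hδle with heq | hlt
        · exact hcase ⟨β / ω, heq⟩
        · obtain ⟨m, hm⟩ := Ordinal.lt_omega0.1
            (Ordinal.sub_lt_of_lt_add hlt Ordinal.omega0_pos)
          have hde : δ = ω * (β / ω) + (m : Ordinal) := by
            rw [← hm, Ordinal.add_sub_cancel_of_le hlamlt.le]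
          cases m with
          | zero => rw [Nat.cast_zero, add_zero] at hde; exact absurd hde hlamlt.ne'
          | succ k =>
            have h2 : δ = Order.succ (ω * (β / ω) + (k : Ordinal)) := by
              rw [hde, Nat.cast_add, Nat.cast_one, ← add_assoc, Ordinal.add_one_eq_succ]
            have h3 : ω * (β / ω) + (k : Ordinal) < δ := by
              rw [h2]; exact Order.lt_succ_of_not_isMax (not_isMax _)
            have := hδ.succ_lt h3
            rw [← h2] at this
            exact absurd this (lt_irrefl δ)
    have hstep : ∀ (n : ℕ) (x β : Ordinal.{0}), IsNode n x → x < δ → β < δ →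
        ∃ y, IsNode (n+1) y ∧ pred y = x ∧ x < y ∧ β < y ∧ y < δ := by
      intro n x β hx hxδ hβδ
      obtain ⟨q, hq1, hq2⟩ := hstep0 (max x β) (max_lt hxδ hβδ)
      have hxq : x < ω * q := (le_max_left _ _).trans_lt hq1
      have hμ1 : ω * q < omega1 := hq2.trans h1
      obtain ⟨j, hj⟩ := E_spec hμ1 x hxq
      refine ⟨nodeOf (n+1) (j+1) q, ⟨j+1, q, rfl⟩, ?_, ?_, ?_, ?_⟩
      · rw [pred_node_succ n j q (by rw [hj]; exact hx), hj]
      · exact hxq.trans_le le_self_add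
      · exact ((le_max_right x β).trans_lt hq1).trans_le le_self_add
      · exact add_nat_lt hδ hq2 _
    set t : ℕ → Ordinal.{0} := fun n => if E δ n < δ then E δ n else 0 with ht
    have htlt : ∀ n, t n < δ := by
      intro n
      by_cases h : E δ n < δ <;> simp [t, h, (Ordinal.bot_eq_zero ▸ hδ.bot_lt : (0 : Ordinal) < δ)]
    have h0 : IsNode 0 (nodeOf 0 0 0) ∧ nodeOf 0 0 0 < δ := by
      refine ⟨⟨0, 0, rfl⟩, ?_⟩
      have : nodeOf 0 0 0 = ((Nat.pair 0 0 + 1 : ℕ) : Ordinal) := by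
        rw [nodeOf, mul_zero, zero_add]
      rw [this]
      exact (Ordinal.nat_lt_omega0 _).trans_le (Ordinal.omega0_le_of_isSuccLimit hδ)
    let f : ∀ n : ℕ, {x : Ordinal.{0} // IsNode n x ∧ x < δ} := fun n =>
      Nat.rec ⟨nodeOf 0 0 0, h0⟩
        (fun m ih => ⟨(hstep m ih.1 (t m) ih.2.1 ih.2.2 (htlt m)).choose,
          (hstep m ih.1 (t m) ih.2.1 ih.2.2 (htlt m)).choose_spec.1,
          (hstep m ih.1 (t m) ih.2.1 ih.2.2 (htlt m)).choose_spec.2.2.2.2⟩) n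
    have hfs : ∀ m, pred (f (m+1)).1 = (f m).1 ∧ (f m).1 < (f (m+1)).1 ∧
        t m < (f (m+1)).1 := by
      intro m
      have h := (hstep m (f m).1 (t m) (f m).2.1 (f m).2.2 (htlt m)).choose_spec
      exact ⟨h.2.1, h.2.2.1, h.2.2.2.1⟩
    refine ⟨fun n => (f n).1, strictMono_nat_of_lt_succ (fun n => (hfs n).2.1),
      fun n => (f n).2.2, ?_, fun n => (f n).2.1, fun n => (hfs n).1⟩
    intro β hβ
    obtain ⟨n, hn⟩ := E_spec h1 β hβ
    have htn : t n = β := by rw [ht]; simp only; rw [hn, if_pos hβ]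
    exact ⟨n + 1, by rw [← htn]; exact ((hfs n).2.2).le⟩

lemma agree {b b' : ℕ → Ordinal.{0}} (hb : ∀ n, pred (b (n+1)) = b n)
    (hb' : ∀ n, pred (b' (n+1)) = b' n) :
    ∀ i, b i = b' i → ∀ j ≤ i, b j = b' j := by
  intro i
  induction i with
  | zero =>
    intro h j hj
    have : j = 0 := Nat.le_zero.1 hj
    subst this
    exact h
  | succ i ih =>
    intro h j hj
    rcases Nat.eq_or_lt_of_le hj with rfl | hlt
    · exact h
    · have hii : b i = b' i := by rw [← hb i, ← hb' i, h]
      exact ih hii j (Nat.lt_succ_iff.1 hlt)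

end NeatLadder

/-- There is a ladder system `⟨C_δ : δ < ω₁ limit⟩` (here each ladder is given
by its increasing enumeration `L δ : ℕ → Ordinal`, so `C_δ = range (L δ)` is a
cofinal subset of `δ` of order type `ω`) such that for limits `γ < δ < ω₁`,
`C_γ ∩ C_δ` is an initial segment of both `C_γ` and `C_δ`. -/
theorem neat_ladder_system :
    ∃ L : Ordinal.{0} → ℕ → Ordinal.{0},
      (∀ δ, δ < omega1 → Order.IsSuccLimit δ →
        StrictMono (L δ) ∧ (∀ n, L δ n < δ) ∧ (∀ β < δ, ∃ n, β ≤ L δ n)) ∧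
      (∀ γ δ, γ < δ → δ < omega1 → Order.IsSuccLimit γ → Order.IsSuccLimit δ →
        ∀ x ∈ Set.range (L γ) ∩ Set.range (L δ),
          ∀ y < x, (y ∈ Set.range (L γ) ↔ y ∈ Set.range (L δ))) := by
  classical
  refine ⟨fun δ => if h : δ < omega1 ∧ Order.IsSuccLimit δ
    then (NeatLadder.exists_branch h.1 h.2).choose else fun n => (n : Ordinal), ?_, ?_⟩
  · intro δ h1 h2
    simp only [dif_pos (And.intro h1 h2)]
    obtain ⟨hmono, hlt, hcof, -, -⟩ := (NeatLadder.exists_branch h1 h2).choose_spec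
    exact ⟨hmono, hlt, hcof⟩
  · intro γ δ hγδ hδ1 hγl hδl x hx y hy
    have hγ1 : γ < omega1 := hγδ.trans hδ1
    simp only [dif_pos (And.intro hγ1 hγl), dif_pos (And.intro hδ1 hδl)] at hx ⊢
    obtain ⟨hmono, -, -, hnode, hpred⟩ := (NeatLadder.exists_branch hγ1 hγl).choose_spec
    obtain ⟨hmono', -, -, hnode', hpred'⟩ := (NeatLadder.exists_branch hδ1 hδl).choose_spec
    set b := (NeatLadder.exists_branch hγ1 hγl).choose with hbdef
    set b' := (NeatLadder.exists_branch hδ1 hδl).choose with hbdef'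
    obtain ⟨⟨i, hi⟩, ⟨k, hk⟩⟩ := hx
    have hik : i = k :=
      NeatLadder.node_level_unique (hi ▸ hnode i) (hk ▸ hnode' k)
    subst hik
    have hbb : b i = b' i := by rw [hi, hk]
    have hag : ∀ j ≤ i, b j = b' j := NeatLadder.agree hpred hpred' i hbb
    constructor
    · rintro ⟨m, rfl⟩
      have hmi : m < i := by
        by_contra hle
        push_neg at hle
        exact absurd (hi ▸ hmono.monotone hle) (not_le.2 hy)
      exact ⟨m, (hag m hmi.le).symm⟩
    · rintro ⟨m, rfl⟩
      have hmi : m < i := by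
        by_contra hle
        push_neg at hle
        exact absurd (hk ▸ hmono'.monotone hle) (not_le.2 hy)
      exact ⟨m, hag m hmi.le⟩
end

section
/- Suppose g_δ : δ → ω (δ < ω₁) is a ◇_𝔡-sequence: for every f : ω₁ → ω there is δ ≥ ω with f(ξ) < g_δ(ξ) for all but finitely many ξ < δ. Then the Baire space ω^ω can be partitioned into ℵ₁ many pairwise disjoint nonempty compact sets. -/
open Set

namespace DDaux
open scoped Classical

/-- `Pcond C k`: no element of `C` agrees with `h` on the first `k` coordinates. -/
def Pcond (C : Set (ℕ → ℕ)) (k : ℕ) : Set (ℕ → ℕ) :=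
  {h | ∀ y ∈ C, ∃ j < k, y j ≠ h j}

theorem Pcond_mono {C : Set (ℕ → ℕ)} {k k' : ℕ} (hk : k ≤ k') :
    Pcond C k ⊆ Pcond C k' := by
  intro h hh y hy
  obtain ⟨j, hj, hne⟩ := hh y hy
  exact ⟨j, lt_of_lt_of_le hj hk, hne⟩

theorem not_mem_of_mem_Pcond {C : Set (ℕ → ℕ)} {k : ℕ} {h : ℕ → ℕ}
    (hh : h ∈ Pcond C k) : h ∉ C := by
  intro hC
  obtain ⟨j, _, hne⟩ := hh h hC
  exact hne rfl

theorem isClosed_Pcond (C : Set (ℕ → ℕ)) (k : ℕ) : IsClosed (Pcond C k) := by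
  have : Pcond C k = ⋂ y ∈ C, ⋃ j ∈ Finset.range k, {h : ℕ → ℕ | y j ≠ h j} := by
    ext h
    constructor
    · intro hh
      refine mem_iInter.2 fun y => mem_iInter.2 fun hy => ?_
      obtain ⟨j, hj, hne⟩ := hh y hy
      exact mem_iUnion.2 ⟨j, mem_iUnion.2 ⟨Finset.mem_range.2 hj, hne⟩⟩
    · intro hh y hy
      have := mem_iInter.1 (mem_iInter.1 hh y) hy
      obtain ⟨j, hj, hne⟩ := by simpa only [mem_iUnion, Finset.mem_range] using this
      exact ⟨j, hj, hne⟩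
  rw [this]
  refine isClosed_biInter fun y _ => ?_
  refine isClosed_biUnion_finset fun j _ => ?_
  have : {h : ℕ → ℕ | y j ≠ h j} = (fun h : ℕ → ℕ => h j) ⁻¹' {y j}ᶜ := by
    ext h; simp [eq_comm]
  rw [this]
  exact (isClosed_compl_iff.2 (isOpen_discrete _)).preimage (continuous_apply j)

/-- Membership in `Pcond C k` only depends on the first `k` values. -/
theorem Pcond_agree {C : Set (ℕ → ℕ)} {k : ℕ} {h h' : ℕ → ℕ}
    (hagree : ∀ i < k, h i = h' i) (hh : h ∈ Pcond C k) : h' ∈ Pcond C k := by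
  intro y hy
  obtain ⟨j, hj, hne⟩ := hh y hy
  exact ⟨j, hj, by rw [← hagree j hj]; exact hne⟩

/-- If `C` is compact and `h ∉ C`, some `Pcond C k` contains `h`. -/
theorem exists_Pcond {C : Set (ℕ → ℕ)} (hC : IsCompact C) {h : ℕ → ℕ} (hh : h ∉ C) :
    ∃ k, h ∈ Pcond C k := by
  have hcover : C ⊆ ⋃ j : ℕ, {y : ℕ → ℕ | y j ≠ h j} := by
    intro y hy
    have : y ≠ h := fun e => hh (e ▸ hy)
    rcases Function.ne_iff.1 this with ⟨j, hj⟩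
    exact mem_iUnion.2 ⟨j, hj⟩
  have hopen : ∀ j : ℕ, IsOpen {y : ℕ → ℕ | y j ≠ h j} := by
    intro j
    have : {y : ℕ → ℕ | y j ≠ h j} = (fun y : ℕ → ℕ => y j) ⁻¹' {h j}ᶜ := by
      ext y; simp
    rw [this]
    exact (isOpen_discrete _).preimage (continuous_apply j)
  obtain ⟨F, hF⟩ := hC.elim_finite_subcover _ hopen hcover
  classical
  refine ⟨(F.sup id) + 1, ?_⟩
  intro y hy
  obtain ⟨j, hjF, hne⟩ := by
    have := hF hy
    simpa only [mem_iUnion, Finset.mem_coe, mem_setOf_eq] using this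
  exact ⟨j, Nat.lt_succ_of_le (Finset.le_sup (f := id) hjF), hne⟩

/-- The compact "box" below a bound. -/
theorem isCompact_box (b : ℕ → ℕ) : IsCompact {h : ℕ → ℕ | ∀ i, h i ≤ b i} := by
  have : {h : ℕ → ℕ | ∀ i, h i ≤ b i} = Set.pi Set.univ fun i => Set.Iic (b i) := by
    ext h; simp [Set.pi]
  rw [this]
  exact isCompact_univ_pi fun i => (Set.finite_Iic (b i)).isCompact



/-- Cylinder determined by a finite list. -/
def Cyl (l : List ℕ) : Set (ℕ → ℕ) := {h | ∀ i, (hi : i < l.length) → h i = l.getD i 0}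

theorem isClosed_Cyl (l : List ℕ) : IsClosed (Cyl l) := by
  have : Cyl l = ⋂ i ∈ Finset.range l.length, (fun h : ℕ → ℕ => h i) ⁻¹' {l.getD i 0} := by
    ext h
    simp only [Cyl, mem_setOf_eq, mem_iInter, Finset.mem_range, mem_preimage, mem_singleton_iff]
  rw [this]
  exact isClosed_biInter fun i _ => (isClosed_discrete _).preimage (continuous_apply i)

/-- First `m` values of `h` as a list. -/
def restr (h : ℕ → ℕ) (m : ℕ) : List ℕ := List.ofFn fun i : Fin m => h i

@[simp] theorem restr_length (h : ℕ → ℕ) (m : ℕ) : (restr h m).length = m := by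
  simp [restr]

theorem restr_getD (h : ℕ → ℕ) (m i : ℕ) (hi : i < m) : (restr h m).getD i 0 = h i := by
  rw [List.getD_eq_getElem]
  · simp [restr]
  · simp [hi]

theorem mem_Cyl_restr (h : ℕ → ℕ) (m : ℕ) : h ∈ Cyl (restr h m) := by
  intro i hi
  rw [restr_getD h m i (by simpa using hi)]

theorem restr_take (h : ℕ → ℕ) {k m : ℕ} (hk : k ≤ m) :
    (restr h m).take k = restr h k := by
  apply List.ext_getElem
  · simp [restr, hk, Nat.min_eq_left hk]
  · intro i h1 h2
    simp [restr]

/-- Members of a cylinder agree with the list data. -/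
theorem Cyl_eq_of_mem {h : ℕ → ℕ} {l : List ℕ} (hh : h ∈ Cyl l) :
    l = restr h l.length := by
  apply List.ext_getElem
  · simp
  · intro i h1 h2
    have := hh i (by simpa using h1)
    rw [List.getD_eq_getElem _ _ h1] at this
    simp [restr, ← this]


theorem mem_Cyl_restr_agree {h h' : ℕ → ℕ} {m : ℕ} (hh : h' ∈ Cyl (restr h m)) :
    ∀ i < m, h' i = h i := by
  intro i hi
  have := hh i (by simpa using hi)
  rwa [restr_getD h m i hi] at this

/-- Disjointification of a countable family of compact subsets of Baire space. -/
theorem disjointify (E : ℕ → Set (ℕ → ℕ)) (hE : ∀ n, IsCompact (E n)) :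
    ∃ D : ℕ → Set (ℕ → ℕ), (∀ i, IsCompact (D i)) ∧
      Pairwise (Function.onFun Disjoint D) ∧
      (⋃ i, D i) = (⋃ n, E n) ∧ (∀ i, ∃ n, D i ⊆ E n) := by
  classical
  set U : ℕ → Set (ℕ → ℕ) := fun n => {h | ∀ j < n, h ∉ E j} with hU
  set piece : ℕ × List ℕ → Set (ℕ → ℕ) := fun p =>
    if Cyl p.2 ⊆ U p.1 ∧ (∀ k < p.2.length, ¬ Cyl (p.2.take k) ⊆ U p.1)
      then E p.1 ∩ Cyl p.2 else ∅ with hpiece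
  have piece_subset : ∀ p, piece p ⊆ E p.1 ∩ Cyl p.2 := by
    intro p
    rw [hpiece]
    dsimp only
    split
    · exact subset_rfl
    · exact empty_subset _
  set e : ℕ ≃ ℕ × List ℕ := (Denumerable.eqv (ℕ × List ℕ)).symm with he
  refine ⟨fun i => piece (e i), ?_, ?_, ?_, ?_⟩
  · intro i
    rw [hpiece]; dsimp only
    split
    · exact ((hE _).inter_right (isClosed_Cyl _))
    · exact isCompact_empty
  · -- pairwise disjoint
    intro i i' hne
    have hpp : ∀ p q : ℕ × List ℕ, p ≠ q → Disjoint (piece p) (piece q) := by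
      intro p q hpq
      rw [Set.disjoint_left]
      intro h hhp hhq
      rw [hpiece] at hhp hhq
      dsimp only at hhp hhq
      split at hhp
      case isFalse => exact hhp
      case isTrue hp =>
      split at hhq
      case isFalse => exact hhq
      case isTrue hq =>
      rcases Nat.lt_trichotomy p.1 q.1 with h1 | h1 | h1
      · exact (hq.1 hhq.2) p.1 h1 hhp.1
      · -- same n, different lists
        have hl : p.2 ≠ q.2 := by
          intro h2; exact hpq (Prod.ext h1 h2)
        rcases Nat.lt_trichotomy p.2.length q.2.length with h2 | h2 | h2
        · -- p shorter: q not minimal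
          have : Cyl (q.2.take p.2.length) ⊆ U q.1 := by
            rw [Cyl_eq_of_mem hhq.2, restr_take _ (le_of_lt h2), ← Cyl_eq_of_mem hhp.2, ← h1]
            exact hp.1
          exact (hq.2 p.2.length h2) this
        · apply hl
          rw [Cyl_eq_of_mem hhp.2, Cyl_eq_of_mem hhq.2, h2]
        · have : Cyl (p.2.take q.2.length) ⊆ U p.1 := by
            rw [Cyl_eq_of_mem hhp.2, restr_take _ (le_of_lt h2), ← Cyl_eq_of_mem hhq.2, h1]
            exact hq.1
          exact (hp.2 q.2.length h2) this
      · exact (hp.1 hhp.2) q.1 h1 hhq.1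
    exact hpp _ _ (fun h => hne (e.injective h))
  · -- union
    apply subset_antisymm
    · refine iUnion_subset fun i => (piece_subset (e i)).trans ?_
      exact (inter_subset_left).trans (subset_iUnion E (e i).1)
    · intro h hh
      have hex : ∃ n, h ∈ E n := by simpa using hh
      set n := Nat.find hex with hn
      have hEn : h ∈ E n := Nat.find_spec hex
      have hUn : h ∈ U n := by
        intro j hj
        exact Nat.find_min hex hj
      -- find a length whose cylinder around h is inside U n
      have hQ : ∃ K, Cyl (restr h K) ⊆ U n := by
        have hk : ∀ j, j < n → ∃ k, h ∈ Pcond (E j) k := by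
          intro j hj
          exact exists_Pcond (hE j) (hUn j hj)
        choose kf hkf using hk
        refine ⟨(Finset.range n).sup (fun j => if hj : j < n then kf j hj else 0), ?_⟩
        intro h' hh' j hj hEj
        have hmem : h ∈ Pcond (E j) ((Finset.range n).sup
            (fun j => if hj : j < n then kf j hj else 0)) := by
          refine Pcond_mono ?_ (hkf j hj)
          have := Finset.le_sup (f := fun j => if hj : j < n then kf j hj else 0)
            (Finset.mem_range.2 hj)
          simpa [hj] using this
        have : h' ∈ Pcond (E j) _ := Pcond_agree
          (fun i hi => (mem_Cyl_restr_agree hh' i hi).symm) hmem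
        exact not_mem_of_mem_Pcond this hEj
      set K := Nat.find hQ with hK
      have hKspec : Cyl (restr h K) ⊆ U n := Nat.find_spec hQ
      have hcond : Cyl (restr h K) ⊆ U n ∧
          (∀ k < (restr h K).length, ¬ Cyl ((restr h K).take k) ⊆ U n) := by
        refine ⟨hKspec, ?_⟩
        intro k hk
        rw [restr_take _ (le_of_lt (by simpa using hk))]
        have hkK : k < K := by simpa using hk
        exact Nat.find_min hQ hkK
      refine mem_iUnion.2 ⟨e.symm (n, restr h K), ?_⟩
      rw [hpiece]
      simp only [Equiv.apply_symm_apply]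
      rw [if_pos hcond]
      exact ⟨hEn, mem_Cyl_restr h K⟩
  · intro i
    exact ⟨(e i).1, (piece_subset (e i)).trans inter_subset_left⟩




/-- Extract the natural number from an ordinal below `ω`. -/
noncomputable def toN (a : Ordinal.{0}) : ℕ :=
  if h : a < Ordinal.omega0 then Classical.choose (Ordinal.lt_omega0.mp h) else 0

theorem toN_eq {a : Ordinal.{0}} (h : a < Ordinal.omega0) : (toN a : Ordinal.{0}) = a := by
  rw [toN, dif_pos h]
  exact (Classical.choose_spec (Ordinal.lt_omega0.mp h)).symm

theorem toN_cast (n : ℕ) : toN (n : Ordinal.{0}) = n := by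
  have := toN_eq (Ordinal.nat_lt_omega0 n)
  exact_mod_cast this

theorem countable_lt {o : Ordinal.{0}} (ho : o < omega1) :
    Countable {ξ : Ordinal.{0} // ξ < o} := by
  have h1 : o.card < Cardinal.aleph 1 := Cardinal.lt_ord.1 ho
  have h2 : o.card ≤ Cardinal.aleph0 := by
    rw [← Cardinal.succ_aleph0] at h1
    exact Order.lt_succ_iff.1 h1
  have h3 : Cardinal.mk ↥(Set.Iio o) = Cardinal.lift.{1} o.card :=
    Ordinal.mk_Iio_ordinal o
  have h4 : Cardinal.mk ↥(Set.Iio o) ≤ Cardinal.aleph0 := by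
    rw [h3, ← Cardinal.lift_aleph0.{1,0}]
    exact Cardinal.lift_le.2 h2
  exact Cardinal.mk_le_aleph0_iff.1 h4

theorem mul_omega0_lt {γ : Ordinal.{0}} (hγ : γ < omega1) :
    Ordinal.omega0 * γ < omega1 := by
  show Ordinal.omega0 * γ < (Cardinal.aleph 1).ord
  rw [Cardinal.lt_ord, Ordinal.card_mul, Ordinal.card_omega0]
  exact Cardinal.mul_lt_of_lt (Cardinal.aleph0_le_aleph 1)
    Cardinal.aleph0_lt_aleph_one (Cardinal.lt_ord.1 hγ)

theorem add_nat_lt {α : Ordinal.{0}} (hα : α < omega1) (n : ℕ) :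
    α + (n : Ordinal.{0}) < omega1 := by
  show α + (n : Ordinal.{0}) < (Cardinal.aleph 1).ord
  rw [Cardinal.lt_ord, Ordinal.card_add]
  refine Cardinal.add_lt_of_lt (Cardinal.aleph0_le_aleph 1) (Cardinal.lt_ord.1 hα) ?_
  rw [Ordinal.card_nat]
  exact lt_of_lt_of_le (Cardinal.nat_lt_aleph0 n) (Cardinal.aleph0_le_aleph 1)

/-- Index data for a chunk in batch `γ`. -/
def ChunkIdx (γ : Ordinal.{0}) : Type 1 :=
  ℕ × ℕ × List ℕ × List {ξ : Ordinal.{0} // ξ < Ordinal.omega0 * γ} × ℕ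

instance (γ : Ordinal.{0}) : Nonempty (ChunkIdx γ) := ⟨⟨0, 0, [], [], 0⟩⟩

/-- The basic compact building blocks ("chunks") for batch `γ`. -/
def chunk (g : Ordinal.{0} → Ordinal.{0} → ℕ) (prev : Ordinal.{0} → Set (ℕ → ℕ))
    (γ : Ordinal.{0}) (t : ChunkIdx γ) : Set (ℕ → ℕ) :=
  {h | ∀ i < t.2.1, h i = t.2.2.1.getD i 0} ∩
  {h | ∀ i : ℕ, t.2.1 ≤ i → h i < g (Ordinal.omega0 * γ + (t.1 : Ordinal.{0})) (i : Ordinal.{0})} ∩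
  ⋂ (ξ : Ordinal.{0}) (hξ : ξ < Ordinal.omega0 * γ),
    if (⟨ξ, hξ⟩ : {ξ : Ordinal.{0} // ξ < Ordinal.omega0 * γ}) ∈ t.2.2.2.1
      then Pcond (prev ξ) t.2.2.2.2
      else Pcond (prev ξ) (g (Ordinal.omega0 * γ + (t.1 : Ordinal.{0})) ξ)

theorem chunk_compact (g : Ordinal.{0} → Ordinal.{0} → ℕ) (prev : Ordinal.{0} → Set (ℕ → ℕ))
    (γ : Ordinal.{0}) (t : ChunkIdx γ) : IsCompact (chunk g prev γ t) := by
  set δ : Ordinal.{0} := Ordinal.omega0 * γ + (t.1 : Ordinal.{0}) with hδ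
  set b : ℕ → ℕ := fun i => max (t.2.2.1.getD i 0) (g δ (i : Ordinal.{0})) with hb
  apply IsCompact.of_isClosed_subset (isCompact_box b)
  · -- closed
    refine IsClosed.inter (IsClosed.inter ?_ ?_) ?_
    · have : {h : ℕ → ℕ | ∀ i < t.2.1, h i = t.2.2.1.getD i 0} =
          ⋂ i ∈ Finset.range t.2.1, (fun h : ℕ → ℕ => h i) ⁻¹' {t.2.2.1.getD i 0} := by
        ext h
        simp only [mem_setOf_eq, mem_iInter, Finset.mem_range, mem_preimage, mem_singleton_iff]
      rw [this]
      exact isClosed_biInter fun i _ => (isClosed_discrete _).preimage (continuous_apply i)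
    · have : {h : ℕ → ℕ | ∀ i : ℕ, t.2.1 ≤ i → h i < g δ (i : Ordinal.{0})} =
          ⋂ (i : ℕ) (_ : t.2.1 ≤ i), (fun h : ℕ → ℕ => h i) ⁻¹' (Set.Iio (g δ (i : Ordinal.{0}))) := by
        ext h
        simp only [mem_setOf_eq, mem_iInter, mem_preimage, mem_Iio]
      rw [this]
      exact isClosed_iInter fun i => isClosed_iInter fun _ =>
        (isClosed_discrete _).preimage (continuous_apply i)
    · refine isClosed_iInter fun ξ => isClosed_iInter fun hξ => ?_
      by_cases hs : (⟨ξ, hξ⟩ : {ξ : Ordinal.{0} // ξ < Ordinal.omega0 * γ}) ∈ t.2.2.2.1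
      · rw [if_pos hs]; exact isClosed_Pcond _ _
      · rw [if_neg hs]; exact isClosed_Pcond _ _
  · -- subset of box
    intro h hh
    rcases hh with ⟨⟨h1, h2⟩, -⟩
    intro i
    rcases lt_or_ge i t.2.1 with hi | hi
    · rw [h1 i hi]; exact le_max_left _ _
    · exact le_trans (Nat.le_of_lt_succ (Nat.lt_succ_of_lt (h2 i hi))) (le_max_right _ _)

theorem chunk_disjoint_prev (g : Ordinal.{0} → Ordinal.{0} → ℕ)
    (prev : Ordinal.{0} → Set (ℕ → ℕ)) (γ : Ordinal.{0}) (t : ChunkIdx γ)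
    {ξ : Ordinal.{0}} (hξ : ξ < Ordinal.omega0 * γ) :
    Disjoint (chunk g prev γ t) (prev ξ) := by
  rw [Set.disjoint_left]
  intro h hh hprev
  rcases hh with ⟨-, h3⟩
  have hmem := mem_iInter.1 (mem_iInter.1 h3 ξ) hξ
  by_cases hs : (⟨ξ, hξ⟩ : {ξ : Ordinal.{0} // ξ < Ordinal.omega0 * γ}) ∈ t.2.2.2.1
  · rw [if_pos hs] at hmem
    exact not_mem_of_mem_Pcond hmem hprev
  · rw [if_neg hs] at hmem
    exact not_mem_of_mem_Pcond hmem hprev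

/-- One batch of the construction: a pairwise disjoint compact refinement covering all chunks. -/
theorem exists_step (g : Ordinal.{0} → Ordinal.{0} → ℕ) (γ : Ordinal.{0})
    (prev : Ordinal.{0} → Set (ℕ → ℕ)) (hcnt : Countable {ξ : Ordinal.{0} // ξ < Ordinal.omega0 * γ}) :
    ∃ D : ℕ → Set (ℕ → ℕ), (∀ i, IsCompact (D i)) ∧
      Pairwise (Function.onFun Disjoint D) ∧
      (∀ i {ξ : Ordinal.{0}}, ξ < Ordinal.omega0 * γ → Disjoint (D i) (prev ξ)) ∧
      (∀ t : ChunkIdx γ, chunk g prev γ t ⊆ ⋃ i, D i) := by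
  haveI : Countable (ChunkIdx γ) := by
    unfold ChunkIdx
    infer_instance
  obtain ⟨e, he⟩ := exists_surjective_nat (ChunkIdx γ)
  obtain ⟨D, hcomp, hdisj, hunion, hsub⟩ :=
    disjointify (fun n => chunk g prev γ (e n)) (fun n => chunk_compact g prev γ (e n))
  refine ⟨D, hcomp, hdisj, ?_, ?_⟩
  · intro i ξ hξ
    obtain ⟨n, hn⟩ := hsub i
    exact Set.disjoint_of_subset_left hn (chunk_disjoint_prev g prev γ (e n) hξ)
  · intro t
    obtain ⟨n, hn⟩ := he t
    rw [hunion]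
    exact hn ▸ subset_iUnion (fun n => chunk g prev γ (e n)) n



/-- The transfinite recursion: batch `γ` of the construction. -/
noncomputable def fam (g : Ordinal.{0} → Ordinal.{0} → ℕ) : Ordinal.{0} → ℕ → Set (ℕ → ℕ) :=
  Ordinal.lt_wf.fix fun γ IH =>
    if hγ : γ < omega1 then
      Classical.choose (exists_step g γ
        (fun ξ => if hξ : ξ / Ordinal.omega0 < γ then IH _ hξ (toN (ξ % Ordinal.omega0)) else ∅)
        (countable_lt (mul_omega0_lt hγ)))
    else fun _ => ∅

/-- The pieces with index below `ω·γ`, as seen at stage `γ`. -/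
noncomputable def prevAt (g : Ordinal.{0} → Ordinal.{0} → ℕ) (γ : Ordinal.{0}) :
    Ordinal.{0} → Set (ℕ → ℕ) :=
  fun ξ => if hξ : ξ / Ordinal.omega0 < γ then
    fam g (ξ / Ordinal.omega0) (toN (ξ % Ordinal.omega0)) else ∅

theorem fam_eq (g : Ordinal.{0} → Ordinal.{0} → ℕ) (γ : Ordinal.{0}) :
    fam g γ = if hγ : γ < omega1 then
      Classical.choose (exists_step g γ (prevAt g γ) (countable_lt (mul_omega0_lt hγ)))
    else fun _ => ∅ :=
  WellFounded.fix_eq _ _ _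

theorem fam_spec (g : Ordinal.{0} → Ordinal.{0} → ℕ) {γ : Ordinal.{0}} (hγ : γ < omega1) :
    (∀ i, IsCompact (fam g γ i)) ∧
    Pairwise (Function.onFun Disjoint (fam g γ)) ∧
    (∀ i {ξ : Ordinal.{0}}, ξ < Ordinal.omega0 * γ → Disjoint (fam g γ i) (prevAt g γ ξ)) ∧
    (∀ t : ChunkIdx γ, chunk g (prevAt g γ) γ t ⊆ ⋃ i, fam g γ i) := by
  have h := Classical.choose_spec (exists_step g γ (prevAt g γ) (countable_lt (mul_omega0_lt hγ)))
  rw [show fam g γ = _ from fam_eq g γ, dif_pos hγ]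
  exact ⟨h.1, h.2.1, fun i ξ hξ => h.2.2.1 i hξ, h.2.2.2⟩

theorem fam_compact (g : Ordinal.{0} → Ordinal.{0} → ℕ) (γ : Ordinal.{0}) (i : ℕ) :
    IsCompact (fam g γ i) := by
  by_cases hγ : γ < omega1
  · exact (fam_spec g hγ).1 i
  · rw [fam_eq, dif_neg hγ]
    exact isCompact_empty

/-- The global (ordinal-indexed) family of pieces. -/
noncomputable def Kp (g : Ordinal.{0} → Ordinal.{0} → ℕ) : Ordinal.{0} → Set (ℕ → ℕ) :=
  fun α => fam g (α / Ordinal.omega0) (toN (α % Ordinal.omega0))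

theorem Kp_compact (g : Ordinal.{0} → Ordinal.{0} → ℕ) (α : Ordinal.{0}) :
    IsCompact (Kp g α) := fam_compact g _ _

theorem prevAt_eq (g : Ordinal.{0} → Ordinal.{0} → ℕ) {γ ξ : Ordinal.{0}}
    (hξ : ξ < Ordinal.omega0 * γ) : prevAt g γ ξ = Kp g ξ := by
  have h : ξ / Ordinal.omega0 < γ := (Ordinal.div_lt Ordinal.omega0_ne_zero).2 hξ
  rw [prevAt, dif_pos h]
  rfl

theorem div_omega0_lt {α : Ordinal.{0}} (hα : α < omega1) : α / Ordinal.omega0 < omega1 := by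
  refine lt_of_le_of_lt ?_ hα
  exact le_trans (Ordinal.le_mul_right _ Ordinal.omega0_pos) (Ordinal.mul_div_le α _)

theorem index_div (γ : Ordinal.{0}) (n : ℕ) :
    (Ordinal.omega0 * γ + (n : Ordinal.{0})) / Ordinal.omega0 = γ := by
  rw [Ordinal.mul_add_div _ Ordinal.omega0_ne_zero,
    Ordinal.div_eq_zero_of_lt (Ordinal.nat_lt_omega0 n), add_zero]

theorem index_mod (γ : Ordinal.{0}) (n : ℕ) :
    toN ((Ordinal.omega0 * γ + (n : Ordinal.{0})) % Ordinal.omega0) = n := by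
  rw [Ordinal.mul_add_mod_self, Ordinal.mod_eq_of_lt (Ordinal.nat_lt_omega0 n), toN_cast]

theorem Kp_index (g : Ordinal.{0} → Ordinal.{0} → ℕ) (γ : Ordinal.{0}) (n : ℕ) :
    Kp g (Ordinal.omega0 * γ + (n : Ordinal.{0})) = fam g γ n := by
  rw [Kp, index_div, index_mod]

theorem Kp_disjoint_lt (g : Ordinal.{0} → Ordinal.{0} → ℕ) {α α' : Ordinal.{0}}
    (hα' : α' < omega1) (hlt : α < α') : Disjoint (Kp g α) (Kp g α') := by
  have hdm := Ordinal.div_add_mod α Ordinal.omega0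
  have hdm' := Ordinal.div_add_mod α' Ordinal.omega0
  have hγle : α / Ordinal.omega0 ≤ α' / Ordinal.omega0 := Ordinal.div_le_left (le_of_lt hlt) _
  have hγ' : α' / Ordinal.omega0 < omega1 := div_omega0_lt hα'
  rcases eq_or_lt_of_le hγle with heq | hstrict
  · -- same batch
    have hne : toN (α % Ordinal.omega0) ≠ toN (α' % Ordinal.omega0) := by
      intro h
      have h1 : (toN (α % Ordinal.omega0) : Ordinal.{0}) = (toN (α' % Ordinal.omega0) : Ordinal.{0}) := by
        rw [h]
      rw [toN_eq (Ordinal.mod_lt α Ordinal.omega0_ne_zero),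
        toN_eq (Ordinal.mod_lt α' Ordinal.omega0_ne_zero)] at h1
      have : α = α' := by
        rw [← hdm, ← hdm', heq, h1]
      exact absurd this (ne_of_lt hlt)
    have := (fam_spec g hγ').2.1 (i := toN (α % Ordinal.omega0)) (j := toN (α' % Ordinal.omega0)) hne
    rw [Kp, Kp, heq]
    exact this
  · -- earlier batch
    have hαlt : α < Ordinal.omega0 * (α' / Ordinal.omega0) := by
      calc α = Ordinal.omega0 * (α / Ordinal.omega0) + α % Ordinal.omega0 := hdm.symm
      _ < Ordinal.omega0 * (α / Ordinal.omega0) + Ordinal.omega0 :=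
          add_lt_add_right (Ordinal.mod_lt α Ordinal.omega0_ne_zero) _
      _ = Ordinal.omega0 * Order.succ (α / Ordinal.omega0) := (Ordinal.mul_succ _ _).symm
      _ ≤ Ordinal.omega0 * (α' / Ordinal.omega0) :=
          mul_le_mul_right (Order.succ_le_of_lt hstrict) _
    have hd := (fam_spec g hγ').2.2.1 (toN (α' % Ordinal.omega0)) hαlt
    rw [prevAt_eq g hαlt] at hd
    exact hd.symm

theorem Kp_cover (g : Ordinal.{0} → Ordinal.{0} → ℕ)
    (hg : ∀ f : Ordinal.{0} → ℕ, ∃ δ : Ordinal.{0}, Ordinal.omega0 ≤ δ ∧ δ < omega1 ∧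
      {ξ : Ordinal.{0} | ξ < δ ∧ g δ ξ ≤ f ξ}.Finite) :
    (⋃ α : {a : Ordinal.{0} // a < omega1}, Kp g α.1) = univ := by
  by_contra hcov
  have hne : ∃ h : ℕ → ℕ, ∀ α : Ordinal.{0}, α < omega1 → h ∉ Kp g α := by
    rcases ne_univ_iff_exists_notMem _ |>.1 hcov with ⟨h, hh⟩
    refine ⟨h, fun α hα hmem => hh ?_⟩
    exact mem_iUnion.2 ⟨⟨α, hα⟩, hmem⟩
  obtain ⟨h, hh⟩ := hne
  -- the function to be guessed
  have hkey : ∀ ξ : Ordinal.{0}, ξ < omega1 → ∃ k, h ∈ Pcond (Kp g ξ) k := fun ξ hξ =>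
    exists_Pcond (Kp_compact g ξ) (hh ξ hξ)
  classical
  set kfun : Ordinal.{0} → ℕ := fun ξ =>
    if hξ : ξ < omega1 then Classical.choose (hkey ξ hξ) else 0 with hkfun
  have hkfun_spec : ∀ ξ : Ordinal.{0}, ξ < omega1 → h ∈ Pcond (Kp g ξ) (kfun ξ) := by
    intro ξ hξ
    rw [hkfun]
    dsimp only
    rw [dif_pos hξ]
    exact Classical.choose_spec (hkey ξ hξ)
  set hval : Ordinal.{0} → ℕ := fun ξ => if ξ < Ordinal.omega0 then h (toN ξ) else 0 with hhval
  have hval_nat : ∀ n : ℕ, hval (n : Ordinal.{0}) = h n := by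
    intro n
    rw [hhval]
    dsimp only
    rw [if_pos (Ordinal.nat_lt_omega0 n), toN_cast]
  set f : Ordinal.{0} → ℕ := fun ξ => max (hval ξ) (kfun ξ) with hf
  obtain ⟨δ, hωδ, hδ1, hfin⟩ := hg f
  set γ : Ordinal.{0} := δ / Ordinal.omega0 with hγdef
  have hγ : γ < omega1 := div_omega0_lt hδ1
  have hωγ : Ordinal.omega0 * γ < omega1 := mul_omega0_lt hγ
  set d : ℕ := toN (δ % Ordinal.omega0) with hd
  have hδeq : Ordinal.omega0 * γ + ((d : ℕ) : Ordinal.{0}) = δ := by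
    rw [hd, toN_eq (Ordinal.mod_lt δ Ordinal.omega0_ne_zero)]
    exact Ordinal.div_add_mod δ Ordinal.omega0
  have hωγδ : Ordinal.omega0 * γ ≤ δ := by
    rw [← hδeq]
    exact le_self_add
  set B : Set Ordinal.{0} := {ξ : Ordinal.{0} | ξ < δ ∧ g δ ξ ≤ f ξ} with hB
  -- bound on natural members of B
  have hBn : {n : ℕ | ((n : Ordinal.{0}) ∈ B)}.Finite := by
    apply Set.Finite.preimage _ hfin
    intro a _ b _ hab
    exact Nat.cast_inj.1 hab
  obtain ⟨m0, hm0⟩ := hBn.bddAbove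
  set m : ℕ := m0 + 1 with hm
  have hmB : ∀ i : ℕ, m ≤ i → (i : Ordinal.{0}) ∉ B := by
    intro i hi hiB
    have := hm0 hiB
    omega
  -- the finite exceptional set below ω·γ
  have hsfin : (B ∩ Set.Iio (Ordinal.omega0 * γ)).Finite := hfin.subset inter_subset_left
  set sFin : Finset Ordinal.{0} := hsfin.toFinset with hsFin
  have hsFin_mem : ∀ ξ : Ordinal.{0}, ξ ∈ sFin ↔ ξ ∈ B ∧ ξ < Ordinal.omega0 * γ := by
    intro ξ
    rw [hsFin, Set.Finite.mem_toFinset]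
    rfl
  have hsl : ∀ ξ ∈ sFin.toList, ξ < Ordinal.omega0 * γ := by
    intro ξ hξ
    exact ((hsFin_mem ξ).1 (Finset.mem_toList.1 hξ)).2
  set sL : List {ξ : Ordinal.{0} // ξ < Ordinal.omega0 * γ} :=
    sFin.toList.pmap (fun ξ hξ => ⟨ξ, hξ⟩) hsl with hsL
  have hsL_mem : ∀ (ξ : Ordinal.{0}) (hξ : ξ < Ordinal.omega0 * γ),
      ((⟨ξ, hξ⟩ : {ξ : Ordinal.{0} // ξ < Ordinal.omega0 * γ}) ∈ sL ↔ ξ ∈ B) := by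
    intro ξ hξ
    rw [hsL]
    constructor
    · intro hmem
      obtain ⟨a, ha, hfa⟩ := List.mem_pmap.1 hmem
      have : a = ξ := congrArg Subtype.val hfa
      subst this
      exact ((hsFin_mem a).1 (Finset.mem_toList.1 ha)).1
    · intro hBξ
      exact List.mem_pmap.2 ⟨ξ, Finset.mem_toList.2 ((hsFin_mem ξ).2 ⟨hBξ, hξ⟩), rfl⟩
  set k' : ℕ := (sFin.sup fun ξ => kfun ξ) + 1 with hk'
  have hk'_ge : ∀ ξ ∈ sFin, kfun ξ < k' := by
    intro ξ hξ
    rw [hk']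
    exact Nat.lt_succ_of_le (Finset.le_sup hξ)
  set t : ChunkIdx γ := (d, m, restr h m, sL, k') with ht
  have hmem : h ∈ chunk g (prevAt g γ) γ t := by
    refine ⟨⟨?_, ?_⟩, ?_⟩
    · intro i hi
      exact (restr_getD h m i hi).symm
    · intro i hi
      show h i < g (Ordinal.omega0 * γ + ((d : ℕ) : Ordinal.{0})) (i : Ordinal.{0})
      rw [hδeq]
      have hiδ : (i : Ordinal.{0}) < δ := lt_of_lt_of_le (Ordinal.nat_lt_omega0 i) hωδ
      have hnotB := hmB i hi
      rw [hB] at hnotB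
      simp only [mem_setOf_eq, not_and, not_le] at hnotB
      have := hnotB hiδ
      calc h i = hval (i : Ordinal.{0}) := (hval_nat i).symm
        _ ≤ f (i : Ordinal.{0}) := le_max_left _ _
        _ < g δ (i : Ordinal.{0}) := this
    · refine mem_iInter.2 fun ξ => mem_iInter.2 fun hξ => ?_
      have hξ1 : ξ < omega1 := lt_trans hξ hωγ
      have hprev : prevAt g γ ξ = Kp g ξ := prevAt_eq g hξ
      by_cases hs : (⟨ξ, hξ⟩ : {ξ : Ordinal.{0} // ξ < Ordinal.omega0 * γ}) ∈ sL
      · rw [if_pos hs, hprev]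
        have hξB : ξ ∈ B := (hsL_mem ξ hξ).1 hs
        have hξF : ξ ∈ sFin := (hsFin_mem ξ).2 ⟨hξB, hξ⟩
        exact Pcond_mono (le_of_lt (hk'_ge ξ hξF)) (hkfun_spec ξ hξ1)
      · rw [if_neg hs, hprev]
        show h ∈ Pcond (Kp g ξ) (g (Ordinal.omega0 * γ + ((d : ℕ) : Ordinal.{0})) ξ)
        rw [hδeq]
        have hξB : ξ ∉ B := fun hBξ => hs ((hsL_mem ξ hξ).2 hBξ)
        rw [hB] at hξB
        simp only [mem_setOf_eq, not_and, not_le] at hξB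
        have hgt : f ξ < g δ ξ := hξB (lt_of_lt_of_le hξ hωγδ)
        have : kfun ξ < g δ ξ := lt_of_le_of_lt (le_max_right _ _) hgt
        exact Pcond_mono (le_of_lt this) (hkfun_spec ξ hξ1)
  have hcovered := (fam_spec g hγ).2.2.2 t hmem
  obtain ⟨n, hn⟩ := by simpa only [mem_iUnion] using hcovered
  have hidx : Ordinal.omega0 * γ + (n : Ordinal.{0}) < omega1 := add_nat_lt hωγ n
  apply hh _ hidx
  rw [Kp_index]
  exact hn

theorem not_sigma_compact (C : ℕ → Set (ℕ → ℕ)) (hC : ∀ n, IsCompact (C n)) :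
    (⋃ n, C n) ≠ univ := by
  have hbnd : ∀ n i, ∃ b : ℕ, ∀ x ∈ C n, x i ≤ b := by
    intro n i
    have hfin : ((fun x : ℕ → ℕ => x i) '' C n).Finite :=
      ((hC n).image (continuous_apply i)).finite_of_discrete
    obtain ⟨b, hb⟩ := hfin.bddAbove
    exact ⟨b, fun x hx => hb (mem_image_of_mem _ hx)⟩
  choose bnd hbnd using hbnd
  intro hU
  have hx : (fun i => (Finset.range (i+1)).sup (fun n => bnd n i) + 1) ∈ ⋃ n, C n := by
    rw [hU]; trivial
  obtain ⟨n, hn⟩ := mem_iUnion.1 hx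
  have h1 := hbnd n n _ hn
  have h2 : bnd n n ≤ (Finset.range (n+1)).sup (fun m => bnd m n) :=
    Finset.le_sup (f := fun m => bnd m n) (Finset.mem_range.2 (Nat.lt_succ_self n))
  have h1' : (Finset.range (n+1)).sup (fun m => bnd m n) + 1 ≤ bnd n n := h1
  omega

end DDaux


/-- If there is a `◇_𝔡`-sequence `⟨g_δ : δ < ω₁⟩` (for every `f : ω₁ → ω` there
is `δ ≥ ω` with `f ↾ δ <* g_δ`), then Baire space `ω^ω` can be partitioned into
`ℵ₁` many pairwise disjoint nonempty compact sets. -/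
theorem diamond_d_implies_compact_partition
    (g : Ordinal.{0} → Ordinal.{0} → ℕ)
    (hg : ∀ f : Ordinal.{0} → ℕ, ∃ δ : Ordinal.{0}, Ordinal.omega0 ≤ δ ∧ δ < omega1 ∧
      {ξ : Ordinal.{0} | ξ < δ ∧ g δ ξ ≤ f ξ}.Finite) :
    ∃ K : {o : Ordinal.{0} // o < omega1} → Set (ℕ → ℕ),
      (∀ i, IsCompact (K i) ∧ (K i).Nonempty) ∧
      (Pairwise (Function.onFun Disjoint K)) ∧
      (⋃ i, K i) = Set.univ := by
  classical
  have hcover := DDaux.Kp_cover g hg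
  set I : Set Ordinal.{0} := {α : Ordinal.{0} | α < omega1 ∧ (DDaux.Kp g α).Nonempty} with hI
  -- every point lies in some nonempty piece with index in I
  have hpoint : ∀ x : ℕ → ℕ, ∃ α : Ordinal.{0}, α ∈ I ∧ x ∈ DDaux.Kp g α := by
    intro x
    have : x ∈ ⋃ α : {a : Ordinal.{0} // a < omega1}, DDaux.Kp g α.1 := by
      rw [hcover]; trivial
    obtain ⟨⟨α, hα⟩, hmem⟩ := mem_iUnion.1 this
    exact ⟨α, ⟨hα, ⟨x, hmem⟩⟩, hmem⟩
  -- I is uncountable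
  have hIuncount : ¬ Countable ↥I := by
    intro hcnt
    haveI := hcnt
    haveI : Nonempty ↥I := by
      obtain ⟨α, hα, -⟩ := hpoint (fun _ => 0)
      exact ⟨⟨α, hα⟩⟩
    obtain ⟨e, he⟩ := exists_surjective_nat ↥I
    apply DDaux.not_sigma_compact (fun n => DDaux.Kp g (e n).1)
      (fun n => DDaux.Kp_compact g (e n).1)
    apply eq_univ_of_forall
    intro x
    obtain ⟨α, hαI, hmem⟩ := hpoint x
    obtain ⟨n, hn⟩ := he ⟨α, hαI⟩
    refine mem_iUnion.2 ⟨n, ?_⟩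
    rw [hn]
    exact hmem
  -- cardinality of I is exactly ℵ₁
  have hmkIio : Cardinal.mk ↥(Set.Iio omega1) = Order.succ Cardinal.aleph0 := by
    rw [Ordinal.mk_Iio_ordinal, show omega1 = (Cardinal.aleph 1).ord from rfl,
      Cardinal.card_ord, ← Cardinal.succ_aleph0, Cardinal.lift_succ, Cardinal.lift_aleph0]
  have hmkI : Cardinal.mk ↥I = Cardinal.mk ↥(Set.Iio omega1) := by
    apply le_antisymm
    · exact Cardinal.mk_le_mk_of_subset (fun α hα => hα.1)
    · rw [hmkIio, Order.succ_le_iff]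
      by_contra hle
      push_neg at hle
      exact hIuncount (Cardinal.mk_le_aleph0_iff.1 hle)
  obtain ⟨e⟩ := Cardinal.eq.1 hmkI.symm
  refine ⟨fun i => DDaux.Kp g (e ⟨i.1, i.2⟩).1, ?_, ?_, ?_⟩
  · intro i
    exact ⟨DDaux.Kp_compact g _, (e ⟨i.1, i.2⟩).2.2⟩
  · intro i j hij
    have hne : (e ⟨i.1, i.2⟩).1 ≠ (e ⟨j.1, j.2⟩).1 := by
      intro hα
      apply hij
      have h1 : (⟨i.1, i.2⟩ : ↥(Set.Iio omega1)) = ⟨j.1, j.2⟩ :=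
        e.injective (Subtype.ext hα)
      have h2 : i.1 = j.1 := congrArg Subtype.val h1
      exact Subtype.ext h2
    rcases lt_or_gt_of_ne hne with hlt | hlt
    · exact DDaux.Kp_disjoint_lt g (e ⟨j.1, j.2⟩).2.1 hlt
    · exact (DDaux.Kp_disjoint_lt g (e ⟨i.1, i.2⟩).2.1 hlt).symm
  · apply eq_univ_of_forall
    intro x
    obtain ⟨α, hαI, hmem⟩ := hpoint x
    set j : ↥(Set.Iio omega1) := e.symm ⟨α, hαI⟩ with hj
    refine mem_iUnion.2 ⟨⟨j.1, j.2⟩, ?_⟩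
    have : (⟨j.1, j.2⟩ : ↥(Set.Iio omega1)) = j := rfl
    rw [this, hj, Equiv.apply_symm_apply]
    exact hmem
end

section
/- Suppose every pair (⃗C, ⃗r), where ⃗C is a ladder system and ⃗r a sequence of distinct reals in 2^ω indexed by countable limit ordinals, admits a decomposition lim(ω₁) = ⋃_n X_n such that |C_γ ∩ C_δ| ≤ Δ(r_γ, r_δ) whenever γ < δ lie in the same X_n. Then ◇(ℝ^ω, ℝ, ∌-range) fails for the Borel function F defined via a fixed ladder system with the initial-segment-intersection property: F(⟨t_n⟩) (for t_n : δ → 2) is the sequence whose n-th member is the real k ↦ t_n(δ̄_k), where ⟨δ̄_k⟩ enumerates C_δ. That is, there exists g : ω₁ → ℝ^ω (built from the decompositions) such that no function family witnesses guessing: in fact one can choose functions f_m : ω₁ → 2 such that for every limit δ, every entry of g(δ) lies in the range of F(⟨f_m ↾ δ⟩_m). -/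
open Set Classical

/-- `Δ(r,s)`: the length of the longest common initial segment of `r, s ∈ 2^ω`
(`⊤` if `r = s`). -/
noncomputable def DeltaSplit (r s : ℕ → Bool) : ℕ∞ :=
  if r = s then ⊤ else ((sInf {n : ℕ | r n ≠ s n} : ℕ) : ℕ∞)

private lemma ladder_prefix (A B : ℕ → Ordinal.{0}) (hA : StrictMono A) (hB : StrictMono B)
    (x : Ordinal.{0}) (hxA : x ∈ Set.range A) (hxB : x ∈ Set.range B)
    (hiff : ∀ y < x, (y ∈ Set.range A ↔ y ∈ Set.range B)) :
    ∀ j, A j ≤ x → A j = B j := by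
  intro j
  induction j using Nat.strong_induction_on with
  | _ j IH =>
    intro hj
    have hmem : A j ∈ Set.range B := by
      rcases lt_or_eq_of_le hj with h | h
      · exact (hiff _ h).mp ⟨j, rfl⟩
      · rw [h]; exact hxB
    obtain ⟨t, ht⟩ := hmem
    have hjt : j ≤ t := by
      by_contra hlt
      push_neg at hlt
      have h2 := IH t hlt (le_of_lt (lt_of_lt_of_le (hA hlt) hj))
      exact absurd (h2.trans ht) (ne_of_lt (hA hlt))
    rcases eq_or_lt_of_le hjt with h | h
    · rw [← ht, h]
    · have hBj : B j < x := by
        have h1 : B j < B t := hB h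
        rw [ht] at h1
        exact lt_of_lt_of_le h1 hj
      obtain ⟨s, hs⟩ := (hiff _ hBj).mpr ⟨j, rfl⟩
      have hsj : s < j := hA.lt_iff_lt.mp (by rw [hs, ← ht]; exact hB h)
      have h3 := IH s hsj (le_of_lt (lt_of_lt_of_le (hA hsj) hj))
      exact absurd (h3.symm.trans hs) (ne_of_lt (hB hsj))

/-- Suppose every ladder system `⃗C` together with any sequence `⃗r` of distinct
reals admits a countable decomposition `lim(ω₁) = ⋃_n X_n` with
`|C_γ ∩ C_δ| ≤ Δ(r_γ, r_δ)` for `γ < δ` in the same piece.  Then, for a fixed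
ladder system `L` with the initial-segment-intersection property, the Borel
function `F` with `F(⟨t_n⟩)(n) = (k ↦ t_n(δ̄_k))` witnesses the failure of
`◇(ℝ^ω, ℝ, ∌)`: for every `g : ω₁ → ℝ^ω` there are `f_m : ω₁ → 2` such that for
every limit `δ < ω₁` every entry of `g(δ)` lies in the range of
`F(⟨f_m ↾ δ⟩_m)`, i.e. `g(δ)(i) = (k ↦ f_n(δ̄_k))` for some `n`. -/
theorem decomposition_implies_not_guessing
    (hdecomp : ∀ (M : Ordinal.{0} → ℕ → Ordinal.{0}),
      (∀ δ, δ < omega1 → Order.IsSuccLimit δ →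
        StrictMono (M δ) ∧ (∀ n, M δ n < δ) ∧ (∀ β < δ, ∃ n, β ≤ M δ n)) →
      ∀ r : Ordinal.{0} → ℕ → Bool,
      (∀ γ δ : Ordinal.{0}, γ < omega1 → δ < omega1 → Order.IsSuccLimit γ → Order.IsSuccLimit δ →
        r γ = r δ → γ = δ) →
      ∃ X : Ordinal.{0} → ℕ,
        ∀ γ δ : Ordinal.{0}, γ < δ → δ < omega1 → Order.IsSuccLimit γ → Order.IsSuccLimit δ →
          X γ = X δ →
          (Set.range (M γ) ∩ Set.range (M δ)).encard ≤ DeltaSplit (r γ) (r δ))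
    (L : Ordinal.{0} → ℕ → Ordinal.{0})
    (hL : ∀ δ, δ < omega1 → Order.IsSuccLimit δ →
      StrictMono (L δ) ∧ (∀ n, L δ n < δ) ∧ (∀ β < δ, ∃ n, β ≤ L δ n))
    (hLinit : ∀ γ δ, γ < δ → δ < omega1 → Order.IsSuccLimit γ → Order.IsSuccLimit δ →
      ∀ x ∈ Set.range (L γ) ∩ Set.range (L δ),
        ∀ y < x, (y ∈ Set.range (L γ) ↔ y ∈ Set.range (L δ))) :
    ∀ g : Ordinal.{0} → ℕ → (ℕ → Bool),
      ∃ f : ℕ → Ordinal.{0} → Bool,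
        ∀ δ : Ordinal.{0}, δ < omega1 → Order.IsSuccLimit δ →
          ∀ i : ℕ, ∃ n : ℕ, ∀ k : ℕ, g δ i k = f n (L δ k) := by
  intro g
  classical
  -- an injection of `ω₁` into the reals
  obtain ⟨ι, hι⟩ : ∃ ι : Ordinal.{0} → ℕ → Bool,
      ∀ γ δ, γ < omega1 → δ < omega1 → ι γ = ι δ → γ = δ := by
    have h1 : Cardinal.mk (Set.Iio omega1) = Cardinal.lift.{1,0} (Cardinal.aleph 1) := by
      rw [Ordinal.mk_Iio_ordinal, omega1, Cardinal.card_ord]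
    have h2 : Cardinal.lift.{0,1} (Cardinal.mk (Set.Iio omega1)) ≤
        Cardinal.lift.{1,0} (Cardinal.mk (ℕ → Bool)) := by
      rw [h1, Cardinal.lift_lift]
      apply Cardinal.lift_le.mpr
      calc Cardinal.aleph 1 ≤ Cardinal.continuum := Cardinal.aleph_one_le_continuum
        _ = Cardinal.mk (ℕ → Bool) := by
          rw [Cardinal.mk_arrow]
          simp
    obtain ⟨e⟩ := Cardinal.lift_mk_le'.mp h2
    refine ⟨fun δ => if h : δ < omega1 then e ⟨δ, h⟩ else fun _ => false, ?_⟩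
    intro γ δ hγ hδ hE
    simp only [dif_pos hγ, dif_pos hδ] at hE
    exact congrArg Subtype.val (e.injective hE)
  -- the doubled ladder system
  set M : Ordinal.{0} → ℕ → Ordinal.{0} :=
    fun δ n => L δ (n / 2) + (((n % 2 + 1) * 4 ^ (n / 2) : ℕ) : Ordinal) with hMdef
  have hnatlt : ∀ (δ a : Ordinal.{0}), Order.IsSuccLimit δ → a < δ → ∀ m : ℕ, a + (m : Ordinal) < δ := by
    intro δ a hlim ha m
    induction m with
    | zero => simpa using ha
    | succ m ih =>
      rw [Nat.cast_add, Nat.cast_one, ← add_assoc, Ordinal.add_one_eq_succ]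
      exact hlim.succ_lt ih
  have hMlad : ∀ δ, δ < omega1 → Order.IsSuccLimit δ →
      StrictMono (M δ) ∧ (∀ n, M δ n < δ) ∧ (∀ β < δ, ∃ n, β ≤ M δ n) := by
    intro δ hδ hlim
    obtain ⟨hmono, hlt, hcof⟩ := hL δ hδ hlim
    refine ⟨strictMono_nat_of_lt_succ ?_, ?_, ?_⟩
    · intro n
      have h4 : 0 < 4 ^ (n / 2) := pow_pos (by norm_num) _
      rcases Nat.even_or_odd n with he | ho
      · obtain ⟨j, hj⟩ := he
        have e1 : n / 2 = j := by omega
        have e2 : n % 2 = 0 := by omega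
        have e3 : (n + 1) / 2 = j := by omega
        have e4 : (n + 1) % 2 = 1 := by omega
        simp only [hMdef, e1, e2, e3, e4]
        apply (add_lt_add_iff_left _).mpr
        have : ((0 + 1) * 4 ^ j : ℕ) < ((1 + 1) * 4 ^ j : ℕ) := by
          have : 0 < 4 ^ j := pow_pos (by norm_num) _
          omega
        exact_mod_cast this
      · obtain ⟨j, hj⟩ := ho
        have e1 : n / 2 = j := by omega
        have e2 : n % 2 = 1 := by omega
        have e3 : (n + 1) / 2 = j + 1 := by omega
        have e4 : (n + 1) % 2 = 0 := by omega
        simp only [hMdef, e1, e2, e3, e4]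
        calc L δ j + (((1 + 1) * 4 ^ j : ℕ) : Ordinal)
            < L δ j + (((0 + 1) * 4 ^ (j + 1) : ℕ) : Ordinal) := by
              apply (add_lt_add_iff_left _).mpr
              have h5 : (4:ℕ) ^ (j+1) = 4 ^ j * 4 := pow_succ 4 j
              have h6 : 0 < 4 ^ j := pow_pos (by norm_num) _
              have : ((1 + 1) * 4 ^ j : ℕ) < ((0 + 1) * 4 ^ (j + 1) : ℕ) := by omega
              exact_mod_cast this
          _ ≤ L δ (j + 1) + (((0 + 1) * 4 ^ (j + 1) : ℕ) : Ordinal) :=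
              add_le_add_left (hmono.monotone (Nat.le_succ j)) _
    · intro n
      simp only [hMdef]
      exact hnatlt δ _ hlim (hlt _) _
    · intro β hβ
      obtain ⟨n, hn⟩ := hcof β hβ
      refine ⟨2 * n, ?_⟩
      simp only [hMdef]
      have e1 : 2 * n / 2 = n := by omega
      rw [e1]
      exact le_trans hn (le_self_add)
  -- the reals fed to the decomposition hypothesis
  set r : ℕ → Ordinal.{0} → ℕ → Bool :=
    fun i δ n => if n % 2 = 0 then g δ i (n / 2) else ι δ (n / 2) with hrdef
  have hrinj : ∀ i, ∀ γ δ : Ordinal.{0}, γ < omega1 → δ < omega1 → Order.IsSuccLimit γ → Order.IsSuccLimit δ →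
      r i γ = r i δ → γ = δ := by
    intro i γ δ hγ hδ _ _ h
    apply hι γ δ hγ hδ
    funext m
    have e1 : ¬ ((2 * m + 1) % 2 = 0) := by omega
    have e2 : (2 * m + 1) / 2 = m := by omega
    have := congrFun h (2 * m + 1)
    simp only [hrdef, if_neg e1, e2] at this
    exact this
  choose X hX using fun i : ℕ => hdecomp M hMlad (r i) (hrinj i)
  -- key consistency lemma
  have key : ∀ i (γ δ' : Ordinal.{0}), γ < δ' → δ' < omega1 → Order.IsSuccLimit γ → Order.IsSuccLimit δ' →
      X i γ = X i δ' → ∀ a b : ℕ, L γ a = L δ' b → g γ i a = g δ' i b := by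
    intro i γ δ' hlt hδ' hlγ hlδ hXX a b hab
    have hγ1 : γ < omega1 := lt_trans hlt hδ'
    obtain ⟨hmγ, hltγ, _⟩ := hL γ hγ1 hlγ
    obtain ⟨hmδ, hltδ, _⟩ := hL δ' hδ' hlδ
    have hxA : L δ' b ∈ Set.range (L γ) := ⟨a, hab⟩
    have hxB : L δ' b ∈ Set.range (L δ') := ⟨b, rfl⟩
    have hiff := hLinit γ δ' hlt hδ' hlγ hlδ (L δ' b) ⟨hxA, hxB⟩
    have hpre := ladder_prefix (L γ) (L δ') hmγ hmδ (L δ' b) hxA hxB hiff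
    have hba : a = b := by
      have h1 : L γ a = L δ' a := hpre a (le_of_eq hab)
      exact hmδ.injective (h1.symm.trans hab)
    subst hba
    have hprefix : ∀ j ≤ a, L γ j = L δ' j := fun j hj =>
      hpre j (le_trans (hmγ.monotone hj) (le_of_eq hab))
    have hMeq : ∀ n < 2 * a + 2, M γ n = M δ' n := by
      intro n hn
      have hdiv : n / 2 ≤ a := by omega
      simp only [hMdef]
      rw [hprefix _ hdiv]
    have hsub : (M δ') '' ↑(Finset.range (2 * a + 2)) ⊆
        Set.range (M γ) ∩ Set.range (M δ') := by
      rintro y ⟨n, hn, rfl⟩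
      simp only [Finset.coe_range, Set.mem_Iio] at hn
      exact ⟨⟨n, hMeq n hn⟩, ⟨n, rfl⟩⟩
    have hcard : ((2 * a + 2 : ℕ) : ℕ∞) ≤ (Set.range (M γ) ∩ Set.range (M δ')).encard := by
      have h1 : ((M δ') '' ↑(Finset.range (2 * a + 2))).encard = ((2 * a + 2 : ℕ) : ℕ∞) := by
        rw [Set.InjOn.encard_image ((hMlad δ' hδ' hlδ).1.injective.injOn),
          Set.encard_coe_eq_coe_finsetCard, Finset.card_range]
      rw [← h1]
      exact Set.encard_mono hsub
    have hdec := hX i γ δ' hlt hδ' hlγ hlδ hXX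
    by_contra hne
    have hval : ∀ β, r i β (2 * a) = g β i a := by
      intro β
      have e1 : (2 * a) % 2 = 0 := by omega
      have e2 : (2 * a) / 2 = a := by omega
      simp only [hrdef]
      rw [if_pos e1, e2]
    have hrne : r i γ ≠ r i δ' := by
      intro hre
      apply hne
      rw [← hval γ, ← hval δ', hre]
    have hmem : (2 * a) ∈ {n : ℕ | r i γ n ≠ r i δ' n} := by
      simp only [Set.mem_setOf_eq, hval]
      exact hne
    unfold DeltaSplit at hdec
    rw [if_neg hrne] at hdec
    have hfin : ((2 * a + 2 : ℕ) : ℕ∞) ≤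
        ((sInf {n : ℕ | r i γ n ≠ r i δ' n} : ℕ) : ℕ∞) := le_trans hcard hdec
    have hfin' : (2 * a + 2 : ℕ) ≤ sInf {n : ℕ | r i γ n ≠ r i δ' n} := by
      exact_mod_cast hfin
    have hle := Nat.sInf_le hmem
    omega
  -- construct the guessing functions
  have hF : ∃ F : ℕ → ℕ → Ordinal.{0} → Bool,
      ∀ δ, δ < omega1 → Order.IsSuccLimit δ → ∀ i k, g δ i k = F i (X i δ) (L δ k) := by
    refine ⟨fun i j α =>
      if h : ∃ δ', δ' < omega1 ∧ Order.IsSuccLimit δ' ∧ X i δ' = j ∧ ∃ k', L δ' k' = α then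
        g h.choose i h.choose_spec.2.2.2.choose
      else false, ?_⟩
    intro δ hδ hlim i k
    have hP : ∃ δ', δ' < omega1 ∧ Order.IsSuccLimit δ' ∧ X i δ' = X i δ ∧ ∃ k', L δ' k' = L δ k :=
      ⟨δ, hδ, hlim, rfl, k, rfl⟩
    simp only [dif_pos hP]
    have main : ∀ (δ₀ : Ordinal.{0}) (k₀ : ℕ), δ₀ < omega1 → Order.IsSuccLimit δ₀ →
        X i δ₀ = X i δ → L δ₀ k₀ = L δ k → g δ i k = g δ₀ i k₀ := by
      intro δ₀ k₀ hδ₀ hlim₀ hXeq hk₀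
      rcases lt_trichotomy δ₀ δ with hlt | heq | hgt
      · exact (key i δ₀ δ hlt hδ hlim₀ hlim hXeq k₀ k hk₀).symm
      · subst heq
        have hk : k₀ = k := (hL δ₀ hδ₀ hlim₀).1.injective hk₀
        rw [hk]
      · exact key i δ δ₀ hgt hδ₀ hlim hlim₀ hXeq.symm k k₀ hk₀.symm
    exact main hP.choose hP.choose_spec.2.2.2.choose hP.choose_spec.1
      hP.choose_spec.2.1 hP.choose_spec.2.2.1 hP.choose_spec.2.2.2.choose_spec
  obtain ⟨F, hFspec⟩ := hF
  refine ⟨fun n => F n.unpair.1 n.unpair.2, ?_⟩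
  intro δ hδ hlim i
  refine ⟨Nat.pair i (X i δ), ?_⟩
  intro k
  simpa using hFspec δ hδ hlim i k
end

section
/- Let ⟨A_ξ : ξ < δ⟩ be an almost disjoint family of infinite subsets of ω indexed by an infinite countable ordinal δ with bijection e : ω ↔ δ, and let g : ω → ω be increasing. Define A_δ = ω \ ⋃_n [A_{e(n)} \ (g(n) ∪ ⋃_{i<n} A_{e(i)})]. Then A_δ ∩ A_ξ is finite for every ξ < δ. Moreover, if B is an infinite subset of ω almost disjoint from every A_ξ (ξ < δ) such that I = {n : B ∩ A_{e(n)} \ ⋃_{i<n} A_{e(i)} ≠ ∅} is infinite, and the function F(k) = min(B ∩ A_{e(n_k)} \ ⋃_{i<n_k} A_{e(i)}) (n_k the k-th element of I) satisfies F(k) < g(k) for infinitely many k, then B ∩ A_δ is infinite. -/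
open Set

lemma card_inter_Iio_le (I : Set ℕ) (n : ℕ) : Nat.card ↥(I ∩ Set.Iio n) ≤ n := by
  have h := Nat.card_mono (Set.finite_Iio n) (Set.inter_subset_right (s := I))
  have h2 : Nat.card ↥(Set.Iio n) = n := by
    simp [Nat.card_coe_set_eq, Set.ncard_eq_toFinset_card']
  omega

/-- The combinatorial core of the proof that `◇(𝔟)` implies `𝔞 = ω₁`.  Given an
almost disjoint family `⟨A_ξ : ξ < δ⟩` enumerated by a bijection `e : ω ↔ δ`
and an increasing `g : ω → ω`, set
`A_δ = ω \ ⋃_n (A_{e(n)} \ (g(n) ∪ ⋃_{i<n} A_{e(i)}))`.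
Then `A_δ` is almost disjoint from every `A_ξ`; and if `B` is infinite, almost
disjoint from every `A_ξ`, the index set `I` is infinite, and the trace
function `F` drops below `g` infinitely often, then `B ∩ A_δ` is infinite. -/
theorem diamond_b_mad_core
    (δ : Ordinal.{0}) (hδ : Ordinal.omega0 ≤ δ) (hδ1 : δ < omega1)
    (A : Ordinal.{0} → Set ℕ)
    (hAinf : ∀ ξ < δ, (A ξ).Infinite)
    (hAad : ∀ ξ < δ, ∀ η < δ, ξ ≠ η → (A ξ ∩ A η).Finite)
    (e : ℕ → Ordinal.{0}) (he1 : ∀ n, e n < δ) (he2 : Function.Injective e)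
    (he3 : ∀ ξ < δ, ∃ n, e n = ξ)
    (g : ℕ → ℕ) (hg : Monotone g)
    (Adel : Set ℕ)
    (hAdel : Adel = Set.univ \
      ⋃ n : ℕ, (A (e n) \ (Set.Iio (g n) ∪ ⋃ i : ℕ, ⋃ (_ : i < n), A (e i)))) :
    (∀ ξ < δ, (Adel ∩ A ξ).Finite) ∧
    (∀ B : Set ℕ, B.Infinite → (∀ ξ < δ, (B ∩ A ξ).Finite) →
      ∀ S : ℕ → Set ℕ,
        (∀ n, S n = (B ∩ A (e n)) \ ⋃ i : ℕ, ⋃ (_ : i < n), A (e i)) →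
        ∀ I : Set ℕ, I = {n : ℕ | (S n).Nonempty} → I.Infinite →
        {n ∈ I | sInf (S n) < g (Nat.card ↥(I ∩ Set.Iio n))}.Infinite →
        (B ∩ Adel).Infinite) := by
  subst hAdel
  constructor
  · -- almost disjointness of Adel from each A ξ
    intro ξ hξ
    obtain ⟨n, rfl⟩ := he3 ξ hξ
    have hsub : (Set.univ \
        ⋃ m : ℕ, (A (e m) \ (Set.Iio (g m) ∪ ⋃ i : ℕ, ⋃ (_ : i < m), A (e i)))) ∩ A (e n)
        ⊆ Set.Iio (g n) ∪ ⋃ i : ℕ, ⋃ (_ : i < n), (A (e i) ∩ A (e n)) := by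
      rintro x ⟨⟨-, hx⟩, hxA⟩
      simp only [Set.mem_iUnion, not_exists, Set.mem_diff, not_and, not_not,
        Set.mem_union, Set.mem_Iio] at hx ⊢
      rcases hx n hxA with h | h
      · exact Or.inl h
      · obtain ⟨i, hi, hxi⟩ := h
        exact Or.inr ⟨i, hi, hxi, hxA⟩
    refine Set.Finite.subset (Set.Finite.union (Set.finite_Iio _) ?_) hsub
    refine Set.Finite.biUnion (Set.finite_Iio n) ?_
    intro i hi
    refine hAad (e i) (he1 i) (e n) (he1 n) ?_
    intro h
    exact absurd (he2 h) (Nat.ne_of_lt hi)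
  · intro B hB hBad S hS I hI hIinf hJinf
    set Adel := Set.univ \
      ⋃ m : ℕ, (A (e m) \ (Set.Iio (g m) ∪ ⋃ i : ℕ, ⋃ (_ : i < m), A (e i))) with hAdel
    set J := {n ∈ I | sInf (S n) < g (Nat.card ↥(I ∩ Set.Iio n))} with hJ
    have hmem : ∀ n ∈ J, sInf (S n) ∈ S n := by
      intro n hn
      have hne : (S n).Nonempty := by
        have : n ∈ I := hn.1
        rw [hI] at this; exact this
      exact Nat.sInf_mem hne
    have hSn : ∀ n ∈ J, sInf (S n) ∈ B ∧ sInf (S n) ∈ A (e n) ∧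
        ∀ i < n, sInf (S n) ∉ A (e i) := by
      intro n hn
      have h := hmem n hn
      rw [hS n] at h
      rw [show ((B ∩ A (e n)) \ ⋃ i : ℕ, ⋃ (_ : i < n), A (e i)) = S n from (hS n).symm] at h
      obtain ⟨⟨hb, ha⟩, hni⟩ := (by rw [hS n] at h ⊢; exact h :
        sInf (S n) ∈ (B ∩ A (e n)) \ ⋃ i : ℕ, ⋃ (_ : i < n), A (e i))
      refine ⟨hb, ha, fun i hi hmem' => hni ?_⟩
      simp only [Set.mem_iUnion]
      exact ⟨i, hi, hmem'⟩
    have himg : ∀ n ∈ J, sInf (S n) ∈ B ∩ Adel := by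
      intro n hn
      obtain ⟨hb, ha, hni⟩ := hSn n hn
      refine ⟨hb, Set.mem_univ _, ?_⟩
      simp only [Set.mem_iUnion, not_exists, Set.mem_diff, not_and, not_not,
        Set.mem_union, Set.mem_Iio, Set.mem_iUnion]
      intro m hxm
      rcases lt_trichotomy m n with h | rfl | h
      · exact absurd hxm (hni m h)
      · left
        have hcard : Nat.card ↥(I ∩ Set.Iio m) ≤ m := card_inter_Iio_le I m
        exact lt_of_lt_of_le hn.2 (hg hcard)
      · exact Or.inr ⟨n, h, ha⟩
    have hinj : Set.InjOn (fun n => sInf (S n)) J := by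
      intro n hn n' hn' heq
      simp only at heq
      by_contra hne
      rcases Nat.lt_or_ge n n' with h | h
      · exact (hSn n' hn').2.2 n h (heq ▸ (hSn n hn).2.1)
      · have h' : n' < n := by omega
        exact (hSn n hn).2.2 n' h' (heq ▸ (hSn n' hn').2.1)
    have : ((fun n => sInf (S n)) '' J).Infinite := hJinf.image hinj
    refine this.mono ?_
    rintro x ⟨n, hn, rfl⟩
    exact himg n hn
end
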